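/- arXiv:1202.6020 — 9 statements merged into one kernel-verified Lean document; each statement's English description precedes it below -/
import Mathlib

section
/- Let K be a number field, O_K its ring of integers, and 𝔭 a nonzero prime ideal of O_K. If r, s, t are real numbers with 0 < r ≤ s ≤ t and both f_{𝔭,r} and f_{𝔭,t} are Euclidean functions on O_K, then f_{𝔭,s} is also a Euclidean function on O_K. In particular, the Euclidean window w(𝔭) is an interval. -/
/-!
Changing the weight from `c` to `c'` multiplies `f_{𝔭,c}(α)` by `(c'/c)^{v_𝔭(α)}`, so a
remainder `x` with `f_{𝔭,c}(x) < f_{𝔭,c}(b)` stays smaller under the weight `c' ≥ c` as soon as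
`v_𝔭(x) ≤ v_𝔭(b)`, and under the weight `c' ≤ c` as soon as `v_𝔭(b) ≤ v_𝔭(x)`. Now take
remainders `x = a - b q_r` and `y = a - b q_t` for the weights `r` and `t`. Their difference is
an integral multiple of `b`, so `v_𝔭(x - y) ≥ v_𝔭(b)`, and the ultrametric inequality rules out
`v_𝔭(y) < v_𝔭(b) < v_𝔭(x)`. Hence one of the two remainders works for every `s` between
`r` and `t`.
-/

open scoped Classical

open NumberField IsDedekindDomain

/-- The exponent `v_𝔭(α)` of the prime `v` in the factorization of the fractional
ideal `α·𝓞 K`, for `α ≠ 0`; by convention `adicVal v 0 = 0`. -/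
noncomputable def adicVal {K : Type*} [Field K] [NumberField K]
    (v : HeightOneSpectrum (𝓞 K)) (α : K) : ℤ :=
  if h : α = 0 then 0
  else -Multiplicative.toAdd (WithZero.unzero ((Valuation.ne_zero_iff (v.valuation K)).mpr h))

/-- The weighted norm `f_{𝔭,c}(α) = |N(α)| · (c/N𝔭)^{v_𝔭(α)}`, with `f_{𝔭,c}(0) = 0`. -/
noncomputable def weightedNorm {K : Type*} [Field K] [NumberField K]
    (v : HeightOneSpectrum (𝓞 K)) (c : ℝ) (α : K) : ℝ :=
  if α = 0 then 0
  else |(Algebra.norm ℚ α : ℚ)| * (c / (Ideal.absNorm v.asIdeal : ℝ)) ^ (adicVal v α)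

/-- `f` is a Euclidean function on `𝓞 K`. -/
def IsEuclideanFunction {K : Type*} [Field K] [NumberField K] (f : K → ℝ) : Prop :=
  ∀ a b : 𝓞 K, b ≠ 0 → ∃ q : 𝓞 K, f ((a : K) - b * q) < f (b : K)

theorem Valuation.le_or_le_of_sub_eq_mul {R Γ₀ : Type*} [Ring R]
    [LinearOrderedCommMonoidWithZero Γ₀] (w : Valuation R Γ₀) {x y b q : R} (hq : w q ≤ 1)
    (h : x - y = b * q) : w b ≤ w x ∨ w y ≤ w b := by
  by_contra! hxy
  have hsub : w (x - y) ≤ w b := by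
    simpa only [h, map_mul] using mul_le_of_le_one_right' hq
  have hy : w y ≤ w b := by
    simpa only [sub_sub_cancel] using w.map_sub_le hxy.1.le hsub
  exact hy.not_gt hxy.2

section WeightedNorm

variable {K : Type*} [Field K] [NumberField K] (v : HeightOneSpectrum (𝓞 K))

theorem valuation_eq_ofAdd_neg_adicVal {α : K} (hα : α ≠ 0) :
    v.valuation K α = ((Multiplicative.ofAdd (-adicVal v α) : Multiplicative ℤ) :
      WithZero (Multiplicative ℤ)) := by
  rw [adicVal, dif_neg hα, neg_neg, ofAdd_toAdd, WithZero.coe_unzero]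

theorem adicVal_le_adicVal_iff {α β : K} (hα : α ≠ 0) (hβ : β ≠ 0) :
    adicVal v α ≤ adicVal v β ↔ v.valuation K β ≤ v.valuation K α := by
  rw [valuation_eq_ofAdd_neg_adicVal v hα, valuation_eq_ofAdd_neg_adicVal v hβ,
    WithZero.coe_le_coe, Multiplicative.ofAdd_le, neg_le_neg_iff]

@[simp]
theorem weightedNorm_zero (c : ℝ) : weightedNorm v c 0 = 0 := by
  simp [weightedNorm]

theorem weightedNorm_pos {c : ℝ} (hc : 0 < c) {α : K} (hα : α ≠ 0) :
    0 < weightedNorm v c α := by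
  have hN : (0 : ℝ) < Ideal.absNorm v.asIdeal := by
    exact_mod_cast Nat.pos_of_ne_zero (Ideal.absNorm_eq_zero_iff.not.mpr v.ne_bot)
  have hNα : (0 : ℝ) < |((Algebra.norm ℚ α : ℚ) : ℝ)| := by
    exact abs_pos.mpr (by exact_mod_cast Algebra.norm_ne_zero_iff.mpr hα)
  rw [weightedNorm, if_neg hα]
  push_cast
  exact mul_pos hNα (zpow_pos (div_pos hc hN) _)

theorem weightedNorm_eq_mul_zpow {c : ℝ} (hc : c ≠ 0) (c' : ℝ) {α : K} (hα : α ≠ 0) :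
    weightedNorm v c' α = weightedNorm v c α * (c' / c) ^ adicVal v α := by
  rw [weightedNorm, weightedNorm, if_neg hα, if_neg hα, mul_assoc, ← mul_zpow]
  congr 2
  field_simp

theorem weightedNorm_lt_of_zpow_le {c c' : ℝ} (hc : 0 < c) (hc' : 0 < c') {x b : K}
    (hx : x ≠ 0) (hb : b ≠ 0) (hpow : (c' / c) ^ adicVal v x ≤ (c' / c) ^ adicVal v b)
    (h : weightedNorm v c x < weightedNorm v c b) :
    weightedNorm v c' x < weightedNorm v c' b := by
  rw [weightedNorm_eq_mul_zpow v hc.ne' c' hx, weightedNorm_eq_mul_zpow v hc.ne' c' hb]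
  calc weightedNorm v c x * (c' / c) ^ adicVal v x
      ≤ weightedNorm v c x * (c' / c) ^ adicVal v b :=
        mul_le_mul_of_nonneg_left hpow (weightedNorm_pos v hc hx).le
    _ < weightedNorm v c b * (c' / c) ^ adicVal v b :=
        mul_lt_mul_of_pos_right h (zpow_pos (div_pos hc' hc) _)

theorem weightedNorm_lt_of_le_of_valuation_le {c c' : ℝ} (hc : 0 < c) (hcc' : c ≤ c')
    {x b : K} (hb : b ≠ 0) (hv : v.valuation K b ≤ v.valuation K x)
    (h : weightedNorm v c x < weightedNorm v c b) :
    weightedNorm v c' x < weightedNorm v c' b := by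
  have hx : x ≠ 0 := by
    rintro rfl
    exact hb (by simpa using hv)
  refine weightedNorm_lt_of_zpow_le v hc (hc.trans_le hcc') hx hb ?_ h
  exact zpow_le_zpow_right₀ ((one_le_div hc).mpr hcc') ((adicVal_le_adicVal_iff v hx hb).mpr hv)

theorem weightedNorm_lt_of_ge_of_valuation_le {c c' : ℝ} (hc' : 0 < c') (hc'c : c' ≤ c)
    {x b : K} (hb : b ≠ 0) (hv : v.valuation K x ≤ v.valuation K b)
    (h : weightedNorm v c x < weightedNorm v c b) :
    weightedNorm v c' x < weightedNorm v c' b := by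
  rcases eq_or_ne x 0 with rfl | hx
  · simpa using weightedNorm_pos v hc' hb
  have hc : 0 < c := hc'.trans_le hc'c
  refine weightedNorm_lt_of_zpow_le v hc hc' hx hb ?_ h
  exact zpow_le_zpow_right_of_le_one₀ (div_pos hc' hc) ((div_le_one hc).mpr hc'c)
    ((adicVal_le_adicVal_iff v hb hx).mpr hv)

end WeightedNorm

/-- If `f_{𝔭,r}` and `f_{𝔭,t}` are Euclidean functions on `𝓞 K` and `r ≤ s ≤ t`,
then `f_{𝔭,s}` is a Euclidean function on `𝓞 K` (the Euclidean window is an interval). -/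
theorem euclidean_window_interval {K : Type*} [Field K] [NumberField K]
    (P : Ideal (𝓞 K)) (hP : P.IsPrime) (h0 : P ≠ ⊥)
    (r s t : ℝ) (hr : 0 < r) (hrs : r ≤ s) (hst : s ≤ t)
    (hEr : IsEuclideanFunction (weightedNorm ⟨P, hP, h0⟩ r))
    (hEt : IsEuclideanFunction (weightedNorm ⟨P, hP, h0⟩ t)) :
    IsEuclideanFunction (weightedNorm ⟨P, hP, h0⟩ s) := by
  set v : HeightOneSpectrum (𝓞 K) := ⟨P, hP, h0⟩
  intro a b hb
  have hbK : (b : K) ≠ 0 := by exact_mod_cast hb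
  obtain ⟨qr, hqr⟩ := hEr a b hb
  obtain ⟨qt, hqt⟩ := hEt a b hb
  have hdiff : ((a : K) - b * qr) - ((a : K) - b * qt) = b * ((qt - qr : 𝓞 K) : K) := by
    push_cast
    ring
  rcases (v.valuation K).le_or_le_of_sub_eq_mul (v.valuation_le_one (qt - qr)) hdiff with h | h
  · exact ⟨qr, weightedNorm_lt_of_le_of_valuation_le v hr hrs hbK h hqr⟩
  · exact ⟨qt, weightedNorm_lt_of_ge_of_valuation_le v (hr.trans_le hrs) hst hbK h hqt⟩
end

section
/- Let p be a prime number and let c be a real number with 0 < c < p. Then the Euclidean minimum of ℤ with respect to the weighted norm f_{p,c} is infinite: for every real number κ there exist a, b ∈ ℤ with b ≠ 0 such that f_{p,c}(a − bq) ≥ κ · f_{p,c}(b) for every q ∈ ℤ. In particular, f_{p,c} is not a Euclidean function on ℤ. -/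
open scoped Classical

/-- The weighted norm `f_{p,c}` on `ℚ`:  `f_{p,c}(x) = |x| · (c/p)^{v_p(x)}` for `x ≠ 0`,
and `f_{p,c}(0) = 0`, where `v_p` is the `p`-adic valuation. -/
noncomputable def fpc (p : ℕ) (c : ℝ) (x : ℚ) : ℝ :=
  if x = 0 then 0 else |(x : ℝ)| * (c / p) ^ (padicValRat p x)

/-!
Take `b = p ^ n` and `a` prime to `p` with `p ^ n / 4 ≤ a ≤ 3 p ^ n / 4`. Every remainder `a - b q`
is then prime to `p`, so `f_{p,c}(a - b q) = |a - b q| ≥ p ^ n / 4`, while `f_{p,c}(b) = c ^ n`;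
the ratio `(p / c) ^ n / 4` is unbounded because `c < p`.
-/

theorem fpc_intCast_of_not_dvd (p : ℕ) (c : ℝ) {x : ℤ} (hx : ¬ (p : ℤ) ∣ x) :
    fpc p c x = |(x : ℝ)| := by
  have hx0 : (x : ℚ) ≠ 0 := Int.cast_ne_zero.mpr fun h => hx (h ▸ dvd_zero _)
  rw [fpc, if_neg hx0, padicValRat.of_int, padicValInt.eq_zero_of_not_dvd hx]
  simp

theorem fpc_prime_pow {p : ℕ} [Fact p.Prime] (c : ℝ) (n : ℕ) : fpc p c ((p : ℚ) ^ n) = c ^ n := by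
  have hp0 : p ≠ 0 := (Fact.out : p.Prime).ne_zero
  have hv : padicValRat p ((p : ℚ) ^ n) = n := by
    rw [← Nat.cast_pow, padicValRat.of_nat, padicValNat.prime_pow]
  rw [fpc, if_neg (pow_ne_zero n (Nat.cast_ne_zero.mpr hp0)), hv, zpow_natCast, Rat.cast_pow,
    Rat.cast_natCast, abs_of_nonneg (by positivity), ← mul_pow,
    mul_div_cancel₀ c (Nat.cast_ne_zero.mpr hp0)]

theorem exists_not_dvd_le_four_mul_le_three_mul {p : ℕ} (hp : 2 ≤ p) {N : ℤ} (hN : 4 ≤ N) :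
    ∃ a : ℤ, ¬ (p : ℤ) ∣ a ∧ N ≤ 4 * a ∧ 4 * a ≤ 3 * N := by
  have hm : N / 2 * 2 ≤ N ∧ N < N / 2 * 2 + 2 := ⟨Int.ediv_mul_le N two_ne_zero, by omega⟩
  by_cases hdvd : (p : ℤ) ∣ N / 2
  · refine ⟨N / 2 + 1, fun h => ?_, by omega, by omega⟩
    have : p ∣ 1 := Int.natCast_dvd_natCast.mp ((Int.dvd_add_right hdvd).mp h)
    exact absurd (Nat.dvd_one.mp this) (by omega)
  · exact ⟨N / 2, hdvd, by omega, by omega⟩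

theorem le_four_mul_abs_sub_mul {N a : ℤ} (h₁ : N ≤ 4 * a) (h₂ : 4 * a ≤ 3 * N) (q : ℤ) :
    N ≤ 4 * |a - N * q| := by
  rcases le_or_gt q 0 with hq | hq
  · nlinarith [le_abs_self (a - N * q)]
  · nlinarith [neg_abs_le (a - N * q)]

theorem exists_forall_mul_fpc_le_fpc_sub_mul {p : ℕ} (hp : p.Prime) {c : ℝ} (hc : 0 < c)
    (hcp : c < p) (κ : ℝ) :
    ∃ a b : ℤ, b ≠ 0 ∧ ∀ q : ℤ, κ * fpc p c (b : ℚ) ≤ fpc p c ((a : ℚ) - b * q) := by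
  have : Fact p.Prime := ⟨hp⟩
  have hpc : 1 < (p : ℝ) / c := (one_lt_div hc).mpr hcp
  obtain ⟨n, hn, hκ⟩ := ((Filter.eventually_ge_atTop 2).and
    ((tendsto_pow_atTop_atTop_of_one_lt hpc).eventually_ge_atTop (4 * κ))).exists
  set N : ℤ := (p : ℤ) ^ n
  have hN : 4 ≤ N := by
    have : 2 ^ 2 ≤ p ^ n :=
      (Nat.pow_le_pow_left hp.two_le 2).trans (Nat.pow_le_pow_right hp.pos hn)
    show (4 : ℤ) ≤ (p : ℤ) ^ n
    exact_mod_cast this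
  obtain ⟨a, hpa, ha₁, ha₂⟩ := exists_not_dvd_le_four_mul_le_three_mul hp.two_le hN
  refine ⟨a, N, by positivity, fun q => ?_⟩
  have hpx : ¬ (p : ℤ) ∣ a - N * q := fun h =>
    hpa ((dvd_sub_left ((dvd_pow_self (p : ℤ) (by omega : n ≠ 0)).mul_right q)).mp h)
  have hdist : (N : ℝ) ≤ 4 * |((a - N * q : ℤ) : ℝ)| := by
    rw [← Int.cast_abs]; exact_mod_cast le_four_mul_abs_sub_mul ha₁ ha₂ q
  have hcn : 0 < c ^ n := by positivity
  rw [show ((a : ℚ) - N * q) = ((a - N * q : ℤ) : ℚ) by push_cast; ring,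
    fpc_intCast_of_not_dvd p c hpx, show (N : ℚ) = (p : ℚ) ^ n by simp [N], fpc_prime_pow]
  calc κ * c ^ n ≤ (p / c) ^ n / 4 * c ^ n := by nlinarith
    _ = (N : ℝ) / 4 := by rw [div_pow, div_mul_eq_mul_div, div_mul_cancel₀ _ hcn.ne']; simp [N]
    _ ≤ _ := by linarith

/-- For a prime `p` and `0 < c < p`, the Euclidean minimum of `ℤ` with respect to
`f_{p,c}` is infinite, and in particular `f_{p,c}` is not a Euclidean function on `ℤ`. -/
theorem fpc_not_euclidean_of_lt (p : ℕ) (hp : p.Prime) (c : ℝ) (hc : 0 < c) (hcp : c < p) :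
    (∀ κ : ℝ, ∃ a b : ℤ, b ≠ 0 ∧ ∀ q : ℤ, κ * fpc p c (b : ℚ) ≤ fpc p c ((a : ℚ) - b * q)) ∧
    ¬ (∀ a b : ℤ, b ≠ 0 → ∃ q : ℤ, fpc p c ((a : ℚ) - b * q) < fpc p c (b : ℚ)) := by
  refine ⟨exists_forall_mul_fpc_le_fpc_sub_mul hp hc hcp, fun heuclid => ?_⟩
  obtain ⟨a, b, hb, hle⟩ := exists_forall_mul_fpc_le_fpc_sub_mul hp hc hcp 1
  obtain ⟨q, hlt⟩ := heuclid a b hb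
  linarith [hle q]
end

section
/- Let p be a prime number and let c be a real number with c ≥ p. Then f_{p,c} is a Euclidean function on ℤ: for all a, b ∈ ℤ with b ≠ 0 there exists q ∈ ℤ such that f_{p,c}(a − bq) < f_{p,c}(b). -/
open scoped Classical

/-!
Since `c / p ≥ 1`, an integer `r` with `|r| < |b|` and `v_p(r) ≤ v_p(b)` satisfies
`f_{p,c}(r) < f_{p,c}(b)`. Let `r₀ ∈ (0, |b|)` be the remainder of `a` modulo `b`. Since
`p^(v_p(b)+1)` does not divide `|b|`, it fails to divide `r₀` or `r₀ - |b|`; both are remainders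
of `a` modulo `b` of absolute value below `|b|`, and the one it fails to divide has valuation at
most `v_p(b)`.
-/

theorem padicValInt_le_of_not_pow_succ_dvd {p : ℕ} (hp : p ≠ 1) {x : ℤ} {n : ℕ}
    (h : ¬(p : ℤ) ^ (n + 1) ∣ x) : padicValInt p x ≤ n := by
  rw [padicValInt_dvd_iff_of_ne_one hp] at h
  omega

theorem not_dvd_or_not_dvd_sub {m x b : ℤ} (hb : ¬m ∣ b) : ¬m ∣ x ∨ ¬m ∣ x - b := by
  by_contra! h
  exact hb (by simpa using dvd_sub h.1 h.2)

theorem exists_abs_sub_mul_lt_padicValInt_le {p : ℕ} (hp : p ≠ 1) (a : ℤ) {b : ℤ}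
    (hb : b ≠ 0) :
    ∃ q : ℤ, |a - b * q| < |b| ∧ padicValInt p (a - b * q) ≤ padicValInt p b := by
  set k := padicValInt p b
  have hm : ¬(p : ℤ) ^ (k + 1) ∣ |b| := by
    rw [dvd_abs, padicValInt_dvd_iff_of_ne_one hp]
    omega
  have hr_nonneg : 0 ≤ a % b := Int.emod_nonneg a hb
  have hr_lt : a % b < |b| := Int.emod_lt_abs a hb
  have hr_def : a - b * (a / b) = a % b := (Int.emod_def a b).symm
  rcases hr_nonneg.eq_or_lt with hr0 | hr_pos
  · refine ⟨a / b, ?_, ?_⟩ <;> rw [hr_def, ← hr0]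
    · simpa using hb
    · simp [padicValInt.zero]
  rcases not_dvd_or_not_dvd_sub (x := a % b) hm with hr | hr
  · refine ⟨a / b, ?_, ?_⟩ <;> rw [hr_def]
    · rwa [abs_of_pos hr_pos]
    · exact padicValInt_le_of_not_pow_succ_dvd hp hr
  · have hshift : a - b * (a / b + b.sign) = a % b - |b| := by
      rw [mul_add, Int.mul_sign_self, ← hr_def, Int.abs_eq_natAbs]
      ring
    refine ⟨a / b + b.sign, ?_, ?_⟩ <;> rw [hshift]
    · rw [abs_of_neg (by omega)]
      omega
    · exact padicValInt_le_of_not_pow_succ_dvd hp hr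

theorem fpc_intCast_lt {p : ℕ} (hp : 0 < p) {c : ℝ} (hc : (p : ℝ) ≤ c) {r b : ℤ}
    (hb : b ≠ 0) (habs : |r| < |b|) (hv : padicValInt p r ≤ padicValInt p b) :
    fpc p c r < fpc p c b := by
  have hcp : 1 ≤ c / p := (one_le_div (by exact_mod_cast hp)).mpr hc
  have hb' : (b : ℚ) ≠ 0 := by exact_mod_cast hb
  have habs' : |(r : ℝ)| < |(b : ℝ)| := by exact_mod_cast habs
  unfold fpc
  rw [if_neg hb']
  by_cases hr : (r : ℚ) = 0
  · rw [if_pos hr]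
    positivity
  rw [if_neg hr, padicValRat.of_int, padicValRat.of_int]
  push_cast
  calc |(r : ℝ)| * (c / p) ^ (padicValInt p r : ℤ)
      ≤ |(r : ℝ)| * (c / p) ^ (padicValInt p b : ℤ) := by gcongr
    _ < |(b : ℝ)| * (c / p) ^ (padicValInt p b : ℤ) := by gcongr

/-- For a prime `p` and a real `c ≥ p`, the weighted norm `f_{p,c}` is a
Euclidean function on `ℤ`. -/
theorem fpc_euclidean_of_ge (p : ℕ) (hp : p.Prime) (c : ℝ) (hc : (p : ℝ) ≤ c) :
    ∀ a b : ℤ, b ≠ 0 → ∃ q : ℤ, fpc p c ((a : ℚ) - b * q) < fpc p c (b : ℚ) := by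
  intro a b hb
  obtain ⟨q, habs, hv⟩ := exists_abs_sub_mul_lt_padicValInt_le hp.ne_one a hb
  exact ⟨q, by exact_mod_cast fpc_intCast_lt hp.pos hc hb habs hv⟩
end

section
/- Let p be a prime number and let c be a real number with c > p. Then the Euclidean minimum of ℤ with respect to f_{p,c} equals 1, that is, sup_{ξ ∈ ℚ} inf_{q ∈ ℤ} f_{p,c}(ξ − q) = 1. -/
open scoped Classical

/-! For the upper bound, `Int.fract ξ` and `Int.fract ξ - 1` both have absolute value `≤ 1`
and differ by `1`, so by the ultrametric inequality one of them has nonpositive `p`-adic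
valuation, and there `f_{p,c} ≤ 1` because `c / p ≥ 1`.

For the lower bound take `ξ = p^k / b` with `p ∤ b` and `c^k < b < c^k + p + 1`. Then
`ξ - q = n / b` with `n = p^k - q b`, and `f_{p,c}(ξ - q) = |n| (c/p)^v / b` for `v = v_p(n)`.
If `v ≥ k`, then `|n| ≥ p^v` gives `f_{p,c}(ξ - q) ≥ c^k / b`; if `v < k`, then `p^v ∣ q b`
forces `p^v ∣ q ≠ 0`, so `|n| ≥ p^v b - p^k` and `f_{p,c}(ξ - q) ≥ (b - p^k) / b`.
Both are at least `1 - (p + 2) (p/c)^k`, which tends to `1` as `c > p`. -/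

open Set

lemma fpc_nonneg {p : ℕ} {c : ℝ} (hc : 0 ≤ c) (x : ℚ) : 0 ≤ fpc p c x := by
  unfold fpc
  split_ifs
  exacts [le_rfl, by positivity]

lemma Nat.Prime.exists_not_dvd_lt_lt {p : ℕ} (hp : p.Prime) {x : ℝ} (hx : 0 ≤ x) :
    ∃ b : ℕ, ¬ p ∣ b ∧ x < b ∧ (b : ℝ) < x + p + 1 := by
  have hp0 : (0 : ℝ) < p := by exact_mod_cast hp.pos
  have hceil := Nat.le_ceil (x / p)
  have hceil' := Nat.ceil_lt_add_one (div_nonneg hx hp0.le)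
  refine ⟨p * ⌈x / p⌉₊ + 1, ?_, ?_, ?_⟩
  · exact (Nat.dvd_add_right (dvd_mul_right p _)).not.2 hp.not_dvd_one
  · push_cast
    calc x = p * (x / p) := (mul_div_cancel₀ x hp0.ne').symm
      _ < p * ⌈x / p⌉₊ + 1 := by nlinarith
  · push_cast
    calc (p : ℝ) * ⌈x / p⌉₊ + 1 < p * (x / p + 1) + 1 := by gcongr
      _ = x + p + 1 := by field_simp

section

variable {p : ℕ} [hp : Fact p.Prime] {c : ℝ}

lemma padicValRat_nonpos_or_nonpos_of_sub_eq_one {x y : ℚ} (h : x - y = 1) :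
    padicValRat p x ≤ 0 ∨ padicValRat p y ≤ 0 := by
  have := padicValRat.min_le_padicValRat_add (p := p) (q := x) (r := -y)
    (by rw [← sub_eq_add_neg, h]; exact one_ne_zero)
  rwa [← sub_eq_add_neg, h, padicValRat.one, padicValRat.neg, min_le_iff] at this

lemma fpc_le_one (hpc : (p : ℝ) ≤ c) {x : ℚ} (hx : |x| ≤ 1) (hv : padicValRat p x ≤ 0) :
    fpc p c x ≤ 1 := by
  have hcp : 1 ≤ c / p := (one_le_div (by exact_mod_cast hp.out.pos)).2 hpc
  unfold fpc
  split_ifs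
  · exact zero_le_one
  · calc |(x : ℝ)| * (c / p) ^ padicValRat p x ≤ 1 * 1 :=
          mul_le_mul (by exact_mod_cast hx) (zpow_le_one_of_nonpos₀ hcp hv) (by positivity)
            zero_le_one
      _ = 1 := one_mul 1

lemma iInf_fpc_sub_int_le_one (hpc : (p : ℝ) ≤ c) (ξ : ℚ) :
    ⨅ q : ℤ, fpc p c (ξ - q) ≤ 1 := by
  have hc : 0 ≤ c := le_trans (Nat.cast_nonneg p) hpc
  have hbdd : BddBelow (range fun q : ℤ => fpc p c (ξ - q)) :=
    ⟨0, by rintro _ ⟨q, rfl⟩; exact fpc_nonneg hc _⟩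
  have hfract_nonneg := Int.fract_nonneg ξ
  have hfract_lt := Int.fract_lt_one ξ
  rcases padicValRat_nonpos_or_nonpos_of_sub_eq_one (p := p) (sub_sub_cancel (Int.fract ξ) 1)
    with hv | hv
  · refine (ciInf_le hbdd ⌊ξ⌋).trans ?_
    rw [Int.self_sub_floor]
    exact fpc_le_one hpc (abs_le.2 ⟨by linarith, hfract_lt.le⟩) hv
  · refine (ciInf_le hbdd (⌊ξ⌋ + 1)).trans ?_
    rw [Int.cast_add, Int.cast_one, ← sub_sub, Int.self_sub_floor]
    exact fpc_le_one hpc (abs_le.2 ⟨by linarith, by linarith⟩) hv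

lemma fpc_intCast_div_natCast (n : ℤ) {b : ℕ} (hb : ¬ p ∣ b) :
    fpc p c (n / b) = |(n : ℝ)| / b * (c / p) ^ padicValInt p n := by
  have hb0 : (b : ℚ) ≠ 0 := Nat.cast_ne_zero.2 fun h => hb (h ▸ dvd_zero p)
  rcases eq_or_ne n 0 with rfl | hn
  · simp [fpc]
  have hn0 : (n : ℚ) ≠ 0 := Int.cast_ne_zero.2 hn
  have hval : padicValRat p (n / b) = padicValInt p n := by
    rw [padicValRat.div hn0 hb0, padicValRat.of_int, padicValRat.of_nat,
      padicValNat.eq_zero_of_not_dvd hb, Nat.cast_zero, sub_zero]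
  rw [fpc, if_neg (div_ne_zero hn0 hb0), hval, zpow_natCast]
  push_cast
  rw [abs_div, Nat.abs_cast]

lemma pow_padicValInt_mul_sub_le_abs {k b : ℕ} (hb : ¬ p ∣ b) (q : ℤ)
    (hv : padicValInt p (p ^ k - q * b) < k) :
    (p : ℤ) ^ padicValInt p (p ^ k - q * b) * (b - p ^ k) ≤ |p ^ k - q * b| := by
  set n : ℤ := p ^ k - q * b with hn
  set v := padicValInt p n
  have hqb : (p : ℤ) ^ v ∣ q * b := by
    have := dvd_sub (pow_dvd_pow (p : ℤ) hv.le) (padicValInt_dvd n)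
    rwa [hn, sub_sub_cancel] at this
  have hcop : IsCoprime (p : ℤ) b :=
    (Nat.prime_iff_prime_int.1 hp.out).irreducible.coprime_iff_not_dvd.2 (by exact_mod_cast hb)
  have hq : (p : ℤ) ^ v ∣ q := hcop.pow_left.dvd_of_dvd_mul_right hqb
  have hq0 : q ≠ 0 := by
    rintro rfl
    have hn0 : n ≠ 0 := by simp [hn, hp.out.ne_zero]
    have := ((padicValInt_dvd_iff (p := p) k n).1 (by simp [hn])).resolve_left hn0
    omega
  have hpvq : (p : ℤ) ^ v ≤ |q| := Int.le_of_dvd (abs_pos.2 hq0) ((dvd_abs _ _).2 hq)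
  have hpv : 1 ≤ (p : ℤ) ^ v := one_le_pow₀ (by exact_mod_cast hp.out.one_lt.le)
  have hpk : 0 ≤ (p : ℤ) ^ k := by positivity
  calc (p : ℤ) ^ v * (b - p ^ k) ≤ |q| * b - p ^ k := by nlinarith
    _ = |q * b| - |(p : ℤ) ^ k| := by rw [abs_mul, Nat.abs_cast, abs_of_nonneg hpk]
    _ ≤ |q * b - p ^ k| := abs_sub_abs_le_abs_sub _ _
    _ = |n| := abs_sub_comm _ _

lemma min_le_abs_mul_pow_padicValInt (hpc : (p : ℝ) ≤ c) {k b : ℕ} (hb : ¬ p ∣ b)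
    (hkb : p ^ k < b) (q : ℤ) :
    min (c ^ k) (b - p ^ k) ≤
      |((p ^ k - q * b : ℤ) : ℝ)| * (c / p) ^ padicValInt p (p ^ k - q * b) := by
  set n : ℤ := p ^ k - q * b with hn
  set v := padicValInt p n
  have hp0 : (0 : ℝ) < p := by exact_mod_cast hp.out.pos
  have hc1 : 1 ≤ c := le_trans (by exact_mod_cast hp.out.one_lt.le) hpc
  have hcv : c ^ v = (p : ℝ) ^ v * (c / p) ^ v := by rw [div_pow]; field_simp
  rcases le_or_gt k v with hkv | hvk
  · have hn0 : n ≠ 0 := by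
      intro h
      have : (b : ℤ) ≤ p ^ k :=
        Int.le_of_dvd (pow_pos (by exact_mod_cast hp.out.pos) k) ⟨q, by linarith⟩
      exact absurd hkb (by exact_mod_cast this.not_gt)
    have hpv : (p : ℤ) ^ v ≤ |n| :=
      Int.le_of_dvd (abs_pos.2 hn0) ((dvd_abs _ _).2 (padicValInt_dvd n))
    calc min (c ^ k) (b - p ^ k) ≤ c ^ v := (min_le_left _ _).trans (pow_le_pow_right₀ hc1 hkv)
      _ = (p : ℝ) ^ v * (c / p) ^ v := hcv
      _ ≤ |(n : ℝ)| * (c / p) ^ v := by gcongr; exact_mod_cast hpv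
  · have hkb' : (p : ℝ) ^ k < b := by exact_mod_cast hkb
    have hpv : (p : ℤ) ^ v * (b - p ^ k) ≤ |n| := pow_padicValInt_mul_sub_le_abs hb q hvk
    calc min (c ^ k) (b - p ^ k) ≤ c ^ v * (b - p ^ k) :=
          (min_le_right _ _).trans (le_mul_of_one_le_left (by linarith) (one_le_pow₀ hc1))
      _ = (p : ℝ) ^ v * (b - p ^ k) * (c / p) ^ v := by rw [hcv]; ring
      _ ≤ |(n : ℝ)| * (c / p) ^ v := by gcongr; exact_mod_cast hpv

lemma exists_one_sub_le_iInf_fpc_sub_int (hpc : (p : ℝ) < c) (k : ℕ) :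
    ∃ ξ : ℚ, 1 - (p + 2) * (p / c) ^ k ≤ ⨅ q : ℤ, fpc p c (ξ - q) := by
  have hp0 : (0 : ℝ) < p := by exact_mod_cast hp.out.pos
  have hc0 : 0 < c := hp0.trans hpc
  obtain ⟨b, hb, hcb, hbc⟩ := hp.out.exists_not_dvd_lt_lt (pow_nonneg hc0.le k)
  have hpkb : (p : ℝ) ^ k < b := (pow_le_pow_left₀ hp0.le hpc.le k).trans_lt hcb
  have hb0 : (0 : ℝ) < b := (pow_pos hc0 k).trans hcb
  refine ⟨(p : ℚ) ^ k / b, le_ciInf fun q => ?_⟩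
  have hξ : (p : ℚ) ^ k / b - q = ((p ^ k - q * b : ℤ) : ℚ) / b := by
    have : (b : ℚ) ≠ 0 := by exact_mod_cast hb0.ne'
    push_cast
    field_simp
  rw [hξ, fpc_intCast_div_natCast _ hb, div_mul_eq_mul_div, le_div_iff₀ hb0]
  refine le_trans ?_ (min_le_abs_mul_pow_padicValInt hpc.le hb (by exact_mod_cast hpkb) q)
  have hpk_le : (p : ℝ) ^ k ≤ (p / c) ^ k * b := by
    rw [div_pow, div_mul_eq_mul_div, le_div_iff₀ (pow_pos hc0 k)]
    gcongr
  have hpk_one : (1 : ℝ) ≤ p ^ k := one_le_pow₀ (by exact_mod_cast hp.out.one_lt.le)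
  have hpk_le' : (p + 2) * (p : ℝ) ^ k ≤ (p + 2) * ((p / c) ^ k * b) := by gcongr
  exact le_min (by nlinarith) (by nlinarith)

end

/-- For a prime `p` and a real `c > p`, the Euclidean minimum of `ℤ` with respect to
`f_{p,c}` equals `1`:  `sup_{ξ ∈ ℚ} inf_{q ∈ ℤ} f_{p,c}(ξ − q) = 1`. -/
theorem fpc_min_eq_one_of_gt (p : ℕ) (hp : p.Prime) (c : ℝ) (hc : (p : ℝ) < c) :
    (⨆ ξ : ℚ, ⨅ q : ℤ, fpc p c (ξ - q)) = 1 := by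
  have := Fact.mk hp
  have hub := iInf_fpc_sub_int_le_one (p := p) hc.le
  have hbdd : BddAbove (range fun ξ : ℚ => ⨅ q : ℤ, fpc p c (ξ - q)) :=
    ⟨1, by rintro _ ⟨ξ, rfl⟩; exact hub ξ⟩
  refine le_antisymm (ciSup_le hub) (le_of_forall_sub_le fun ε hε => ?_)
  have hp0 : (0 : ℝ) < p := by exact_mod_cast hp.pos
  obtain ⟨k, hk⟩ := exists_pow_lt_of_lt_one (div_pos hε (by positivity : (0 : ℝ) < p + 2))
    ((div_lt_one (hp0.trans hc)).2 hc)
  obtain ⟨ξ, hξ⟩ := exists_one_sub_le_iInf_fpc_sub_int hc k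
  refine le_ciSup_of_le hbdd ξ (le_trans ?_ hξ)
  rw [lt_div_iff₀' (by positivity)] at hk
  linarith
end

section
/- Let K = ℚ(√14) with ring of integers O_K = ℤ[√14], and let 𝔭 = (2, √14) be the prime ideal of O_K above 2 (of norm 2). If, for a real number c > 0, the weighted norm f_{𝔭,c} is a Euclidean function on O_K, then √5 < c < √7. In other words, the Euclidean window satisfies w(𝔭) ⊆ (√5, √7). -/
open scoped Classical

open NumberField IsDedekindDomain

/-!
Every integer of `K` is `m + n√14` with `m, n ∈ ℤ`, of norm `m² - 14n²`, and `𝔭² = (2)`.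
Hence `f(2) = c²`, and `f(α) = |N α|` when `m` is odd.

Dividing `1 + √14` by `2` leaves a remainder with `m, n` odd; its norm is `3 mod 8` and a square
mod `7`, so its absolute value is at least `5`, forcing `5 < c²`.

Dividing `2` by `7 + 2√14` (norm `-7`, prime to `𝔭`) leaves a remainder with `m ≡ 2 mod 7`. If `m`
is odd its norm has absolute value at least `7`; if `m` is even and `n` odd it lies in `𝔭 \ 𝔭²`
with norm of absolute value at least `10`, so `f ≥ 5c`; otherwise it lies in `𝔭²` and `f ≥ c²`.
For `c ≥ √7` every case contradicts `f < 7`.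
-/

attribute [local simp] QuadraticAlgebra.re_ofNat QuadraticAlgebra.im_ofNat

section WeightedNorm

variable {K : Type*} [Field K] [NumberField K] (v : HeightOneSpectrum (𝓞 K))

lemma adicVal_algebraMap {r : 𝓞 K} (hr : r ≠ 0) :
    adicVal v (algebraMap (𝓞 K) K r) = multiplicity v.asIdeal (Ideal.span {r}) := by
  have hα : algebraMap (𝓞 K) K r ≠ 0 := by simpa using hr
  have hlog : ∀ {x : WithZero (Multiplicative ℤ)} (hx : x ≠ 0),
      Multiplicative.toAdd (WithZero.unzero hx) = WithZero.log x := by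
    intro x hx
    conv_rhs => rw [← WithZero.coe_unzero hx]
    rfl
  rw [adicVal, dif_neg hα, hlog, v.valuation_of_algebraMap,
    v.intValuation_eq_exp_neg_multiplicity hr, WithZero.log_exp, neg_neg]

lemma weightedNorm_algebraMap {r : 𝓞 K} (hr : r ≠ 0) (c : ℝ) :
    weightedNorm v c (algebraMap (𝓞 K) K r) =
      Ideal.absNorm (Ideal.span {r}) *
        (c / Ideal.absNorm v.asIdeal) ^ multiplicity v.asIdeal (Ideal.span {r}) := by
  have hα : algebraMap (𝓞 K) K r ≠ 0 := by simpa using hr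
  rw [weightedNorm, if_neg hα, adicVal_algebraMap v hr, zpow_natCast,
    Ideal.absNorm_span_singleton, ← Algebra.coe_norm_int]
  push_cast
  simp

lemma weightedNorm_algebraMap_of_mem_pow_of_notMem {r : 𝓞 K} (hr : r ≠ 0) {k : ℕ}
    (hk : r ∈ v.asIdeal ^ k) (hk' : r ∉ v.asIdeal ^ (k + 1)) (c : ℝ) :
    weightedNorm v c (algebraMap (𝓞 K) K r) =
      Ideal.absNorm (Ideal.span {r}) * (c / Ideal.absNorm v.asIdeal) ^ k := by
  rw [weightedNorm_algebraMap v hr, multiplicity_eq_of_dvd_of_not_dvd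
    (Ideal.dvd_span_singleton.mpr hk) (Ideal.dvd_span_singleton.not.mpr hk')]

lemma pow_le_weightedNorm_algebraMap_of_mem_pow {c : ℝ} (hc : 1 ≤ c) {r : 𝓞 K} (hr : r ≠ 0)
    {k : ℕ} (hk : r ∈ v.asIdeal ^ k) : c ^ k ≤ weightedNorm v c (algebraMap (𝓞 K) K r) := by
  set m := multiplicity v.asIdeal (Ideal.span {r})
  have hspan : Ideal.span {r} ≠ ⊥ := by simpa using hr
  have hkm : k ≤ m := (FiniteMultiplicity.of_prime_left v.prime hspan).le_multiplicity_of_pow_dvd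
    (Ideal.dvd_span_singleton.mpr hk)
  have hNv : (0 : ℝ) < Ideal.absNorm v.asIdeal :=
    Nat.cast_pos.mpr (Nat.pos_of_ne_zero (Ideal.absNorm_eq_zero_iff.not.mpr v.ne_bot))
  have hdvd : Ideal.absNorm v.asIdeal ^ m ∣ Ideal.absNorm (Ideal.span {r}) := by
    rw [← map_pow]
    exact Ideal.absNorm_dvd_absNorm_of_le (Ideal.le_of_dvd (pow_multiplicity_dvd _ _))
  have hle : (Ideal.absNorm v.asIdeal : ℝ) ^ m ≤ Ideal.absNorm (Ideal.span {r}) := by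
    exact_mod_cast Nat.le_of_dvd (Nat.pos_of_ne_zero (by simpa using hr)) hdvd
  calc c ^ k ≤ c ^ m := pow_le_pow_right₀ hc hkm
    _ = Ideal.absNorm v.asIdeal ^ m * (c / Ideal.absNorm v.asIdeal) ^ m := by
      rw [← mul_pow, mul_div_cancel₀ _ hNv.ne']
    _ ≤ Ideal.absNorm (Ideal.span {r}) * (c / Ideal.absNorm v.asIdeal) ^ m := by
      gcongr
    _ = weightedNorm v c (algebraMap (𝓞 K) K r) := (weightedNorm_algebraMap v hr c).symm

end WeightedNorm

lemma IsEuclideanFunction.exists_lt_of_surjective {K : Type*} [Field K] [NumberField K]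
    {f : K → ℝ} (hf : IsEuclideanFunction f) {R F : Type*} [CommRing R] [FunLike F R (𝓞 K)]
    [RingHomClass F R (𝓞 K)] {g : F} (hg : Function.Surjective g) (a b : R) (hb : g b ≠ 0) :
    ∃ q : R, f (algebraMap (𝓞 K) K (g (a - b * q))) < f (algebraMap (𝓞 K) K (g b)) := by
  obtain ⟨q, hq⟩ := hf (g a) (g b) hb
  obtain ⟨q, rfl⟩ := hg q
  refine ⟨q, ?_⟩
  rw [map_sub, map_mul, map_sub, map_mul]
  exact hq

lemma not_isSquare_of_emod_four {d : ℤ} (hd : d % 4 = 2 ∨ d % 4 = 3) : ¬IsSquare (d : ℚ) := by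
  rw [Rat.isSquare_intCast_iff]
  rintro ⟨n, rfl⟩
  rcases Int.even_or_odd' n with ⟨a, rfl | rfl⟩ <;> ring_nf at hd <;> omega

lemma two_dvd_of_four_dvd_sq_sub_mul_sq {d u t : ℤ} (hd : d % 4 = 2 ∨ d % 4 = 3)
    (h : 4 ∣ u ^ 2 - d * t ^ 2) : 2 ∣ u ∧ 2 ∣ t := by
  rcases Int.even_or_odd' u with ⟨a, rfl | rfl⟩ <;>
    rcases Int.even_or_odd' t with ⟨b, rfl | rfl⟩ <;> ring_nf at h <;> omega

lemma exists_int_eq_of_norms_eq_intCast {d : ℤ} (hd : Squarefree d)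
    (hd4 : d % 4 = 2 ∨ d % 4 = 3) {x y : ℚ} {N N₁ N₂ : ℤ} (hN : N = x ^ 2 - d * y ^ 2)
    (hN₁ : N₁ = (x + 1) ^ 2 - d * y ^ 2) (hN₂ : N₂ = x ^ 2 - d * (y + 1) ^ 2) :
    ∃ m n : ℤ, x = m ∧ y = n := by
  -- `2x` and `2dy` are integers as differences of the given norms; then `d ∣ (2dy)²` gives
  -- `2y ∈ ℤ`, and `(2x)² - d(2y)² = 4N` forces both to be even.
  have hd0 : (d : ℚ) ≠ 0 := by exact_mod_cast (by omega : d ≠ 0)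
  obtain ⟨u, hu⟩ : ∃ u : ℤ, (u : ℚ) = 2 * x :=
    ⟨N₁ - N - 1, by push_cast; linear_combination hN₁ - hN⟩
  obtain ⟨w, hw⟩ : ∃ w : ℤ, (w : ℚ) = 2 * d * y :=
    ⟨N - N₂ - d, by push_cast; linear_combination hN - hN₂⟩
  have hw2 : w ^ 2 = d * (u ^ 2 - 4 * N) := by
    have : (w : ℚ) ^ 2 = d * (u ^ 2 - 4 * N) := by rw [hu, hw, hN]; ring
    exact_mod_cast this
  obtain ⟨t, rfl⟩ : d ∣ w := (hd.dvd_pow_iff_dvd two_ne_zero).mp ⟨_, hw2⟩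
  have ht : (t : ℚ) = 2 * y := mul_left_cancel₀ hd0 (by push_cast at hw; linear_combination hw)
  have h4 : u ^ 2 - d * t ^ 2 = 4 * N := by
    have : (u : ℚ) ^ 2 - d * t ^ 2 = 4 * N := by rw [hu, ht, hN]; ring
    exact_mod_cast this
  obtain ⟨⟨m, rfl⟩, ⟨n, rfl⟩⟩ := two_dvd_of_four_dvd_sq_sub_mul_sq hd4 ⟨N, h4⟩
  exact ⟨m, n, by push_cast at hu; linarith, by push_cast at ht; linarith⟩

section QuadraticField

variable {K : Type*} [Field K] [CharZero K] {d : ℤ} {s : K}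

def quadraticAlgebraHom (hs : s * s = d) : QuadraticAlgebra ℚ d 0 →ₐ[ℚ] K :=
  QuadraticAlgebra.lift ⟨s, by simp [hs, Algebra.smul_def]⟩

lemma quadraticAlgebraHom_apply (hs : s * s = d) (z : QuadraticAlgebra ℚ d 0) :
    quadraticAlgebraHom hs z = algebraMap ℚ K z.re + algebraMap ℚ K z.im * s := by
  simp [quadraticAlgebraHom, Algebra.smul_def]

lemma quadraticAlgebraHom_injective (hd : ¬IsSquare (d : ℚ)) (hs : s * s = d) :
    Function.Injective (quadraticAlgebraHom hs) := by
  rw [injective_iff_map_eq_zero]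
  intro z hz
  rw [quadraticAlgebraHom_apply] at hz
  have him : z.im = 0 := by
    by_contra h
    refine hd ⟨-z.re / z.im, (algebraMap ℚ K).injective ?_⟩
    have hs' : s = algebraMap ℚ K (-z.re / z.im) := by
      rw [map_div₀, map_neg, eq_div_iff (by simpa using h)]
      linear_combination hz
    simp [← hs, hs']
  have hre : z.re = 0 := by simpa [him] using hz
  ext <;> simp [him, hre]

noncomputable def quadraticAlgebraEquiv (hK : Module.finrank ℚ K = 2) (hd : ¬IsSquare (d : ℚ))
    (hs : s * s = d) : QuadraticAlgebra ℚ d 0 ≃ₐ[ℚ] K :=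
  have hinj := quadraticAlgebraHom_injective hd hs
  have : FiniteDimensional ℚ K := Module.finite_of_finrank_eq_succ hK
  AlgEquiv.ofBijective (quadraticAlgebraHom hs) ⟨hinj,
    (LinearMap.injective_iff_surjective_of_finrank_eq_finrank
      (f := (quadraticAlgebraHom hs).toLinearMap)
      (by rw [QuadraticAlgebra.finrank_eq_two, hK])).mp hinj⟩

lemma exists_eq_algebraMap_add_algebraMap_mul (hK : Module.finrank ℚ K = 2)
    (hd : ¬IsSquare (d : ℚ)) (hs : s * s = d) (α : K) :
    ∃ x y : ℚ, α = algebraMap ℚ K x + algebraMap ℚ K y * s := by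
  obtain ⟨z, rfl⟩ := (quadraticAlgebraEquiv hK hd hs).surjective α
  exact ⟨z.re, z.im, quadraticAlgebraHom_apply hs z⟩

lemma norm_algebraMap_add_algebraMap_mul (hK : Module.finrank ℚ K = 2)
    (hd : ¬IsSquare (d : ℚ)) (hs : s * s = d) (x y : ℚ) :
    Algebra.norm ℚ (algebraMap ℚ K x + algebraMap ℚ K y * s) = x ^ 2 - d * y ^ 2 := by
  have h : quadraticAlgebraEquiv hK hd hs ⟨x, y⟩ = algebraMap ℚ K x + algebraMap ℚ K y * s :=
    quadraticAlgebraHom_apply hs _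
  rw [← h, Algebra.norm_eq_of_algEquiv, Algebra.norm_apply]
  trans QuadraticAlgebra.norm (⟨x, y⟩ : QuadraticAlgebra ℚ d 0)
  · exact QuadraticAlgebra.det_toLinearMap_eq_norm _
  · simp [QuadraticAlgebra.norm_def]
    ring

end QuadraticField

section RingOfIntegers

variable {K : Type*} [Field K] {d : ℤ} {ω : 𝓞 K}

def ringOfIntegersHom (hω : ω * ω = d) : QuadraticAlgebra ℤ d 0 →ₐ[ℤ] 𝓞 K :=
  QuadraticAlgebra.lift ⟨ω, by simp [hω]⟩

lemma ringOfIntegersHom_apply (hω : ω * ω = d) (z : QuadraticAlgebra ℤ d 0) :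
    ringOfIntegersHom hω z = z.re + z.im * ω := by
  simp [ringOfIntegersHom, zsmul_eq_mul]

lemma algebraMap_mul_self_eq (hω : ω * ω = d) :
    algebraMap (𝓞 K) K ω * algebraMap (𝓞 K) K ω = d := by
  simpa using congrArg (algebraMap (𝓞 K) K) hω

variable [CharZero K]

lemma algebraMap_ringOfIntegersHom (hω : ω * ω = d) (z : QuadraticAlgebra ℤ d 0) :
    algebraMap (𝓞 K) K (ringOfIntegersHom hω z) =
      quadraticAlgebraHom (algebraMap_mul_self_eq hω) ⟨z.re, z.im⟩ := by
  rw [ringOfIntegersHom_apply, quadraticAlgebraHom_apply]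
  simp

lemma ringOfIntegersHom_injective (hd : ¬IsSquare (d : ℚ)) (hω : ω * ω = d) :
    Function.Injective (ringOfIntegersHom hω) := by
  intro z z' h
  have h' : (⟨z.re, z.im⟩ : QuadraticAlgebra ℚ d 0) = ⟨z'.re, z'.im⟩ :=
    quadraticAlgebraHom_injective (K := K) hd (algebraMap_mul_self_eq hω) <| by
      rw [← algebraMap_ringOfIntegersHom hω, ← algebraMap_ringOfIntegersHom hω, h]
  obtain ⟨hre, him⟩ := QuadraticAlgebra.mk.inj h'
  ext
  · exact_mod_cast hre
  · exact_mod_cast him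

lemma ringOfIntegersHom_ne_zero (hd : ¬IsSquare (d : ℚ)) (hω : ω * ω = d)
    {z : QuadraticAlgebra ℤ d 0} (hz : z ≠ 0) : ringOfIntegersHom hω z ≠ 0 :=
  (map_ne_zero_iff _ (ringOfIntegersHom_injective hd hω)).mpr hz

end RingOfIntegers

section IntegralBasis

variable {K : Type*} [Field K] [NumberField K] {d : ℤ} {ω : 𝓞 K}

lemma norm_ringOfIntegersHom (hK : Module.finrank ℚ K = 2) (hd : ¬IsSquare (d : ℚ))
    (hω : ω * ω = d) (z : QuadraticAlgebra ℤ d 0) :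
    Algebra.norm ℤ (ringOfIntegersHom hω z) = z.re ^ 2 - d * z.im ^ 2 := by
  rw [← Int.cast_inj (α := ℚ), Algebra.coe_norm_int, RingOfIntegers.coe_eq_algebraMap,
    algebraMap_ringOfIntegersHom, quadraticAlgebraHom_apply,
    norm_algebraMap_add_algebraMap_mul hK hd (algebraMap_mul_self_eq hω)]
  push_cast
  rfl

lemma ringOfIntegersHom_surjective (hK : Module.finrank ℚ K = 2) (hd : Squarefree d)
    (hd4 : d % 4 = 2 ∨ d % 4 = 3) (hω : ω * ω = d) :
    Function.Surjective (ringOfIntegersHom hω) := by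
  have hdQ := not_isSquare_of_emod_four hd4
  have hs := algebraMap_mul_self_eq hω
  have hnorm : ∀ (r : 𝓞 K) (x y : ℚ),
      algebraMap (𝓞 K) K r = algebraMap ℚ K x + algebraMap ℚ K y * algebraMap (𝓞 K) K ω →
      (Algebra.norm ℤ r : ℚ) = x ^ 2 - d * y ^ 2 := fun r x y hr => by
    rw [Algebra.coe_norm_int, RingOfIntegers.coe_eq_algebraMap, hr,
      norm_algebraMap_add_algebraMap_mul hK hdQ hs]
  intro r
  obtain ⟨x, y, hxy⟩ := exists_eq_algebraMap_add_algebraMap_mul hK hdQ hs (algebraMap _ K r)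
  obtain ⟨m, n, rfl, rfl⟩ := exists_int_eq_of_norms_eq_intCast hd hd4 (hnorm r x y hxy)
    (hnorm (r + 1) (x + 1) y (by simp only [map_add, map_one, hxy]; ring))
    (hnorm (r + ω) x (y + 1) (by simp only [map_add, map_one, hxy]; ring))
  refine ⟨⟨m, n⟩, RingOfIntegers.coe_injective ?_⟩
  rw [algebraMap_ringOfIntegersHom, quadraticAlgebraHom_apply, hxy]

end IntegralBasis

lemma span_two_omega_sq {R : Type*} [CommRing R] {d : ℤ} {ω : R} (hd4 : d % 4 = 2)
    (hω : ω * ω = d) : Ideal.span {2, ω} ^ 2 = Ideal.span {(2 : R)} := by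
  obtain ⟨k, rfl⟩ : ∃ k, d = 4 * k + 2 := ⟨d / 4, by omega⟩
  apply le_antisymm
  · rw [sq, Ideal.span_mul_span', Ideal.span_le]
    rintro _ ⟨x, hx, y, hy, rfl⟩
    simp only [Set.mem_insert_iff, Set.mem_singleton_iff] at hx hy
    rw [SetLike.mem_coe, Ideal.mem_span_singleton]
    rcases hx with hx | hx <;> rcases hy with hy | hy <;> rw [hx, hy]
    · exact dvd_mul_right 2 2
    · exact dvd_mul_right 2 ω
    · exact dvd_mul_left 2 ω
    · exact ⟨2 * k + 1, by simp only [hω]; push_cast; ring⟩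
  · have h2 : (2 : R) = ω * ω - k * (2 * 2) := by rw [hω]; push_cast; ring
    have hmem : ∀ x ∈ ({2, ω} : Set R), x ∈ Ideal.span {2, ω} := fun x hx => Ideal.subset_span hx
    have hdiff : ω * ω - k * (2 * 2) ∈ Ideal.span {2, ω} * Ideal.span {2, ω} :=
      sub_mem (Ideal.mul_mem_mul (hmem ω (by simp)) (hmem ω (by simp)))
        (Ideal.mul_mem_left _ _ (Ideal.mul_mem_mul (hmem 2 (by simp)) (hmem 2 (by simp))))
    rw [Ideal.span_singleton_le_iff_mem, sq]
    rwa [← h2] at hdiff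

section RamifiedPrime

variable {K : Type*} [Field K] [NumberField K] {d : ℤ} {ω : 𝓞 K}

lemma absNorm_span_two_omega (hK : Module.finrank ℚ K = 2) (hd4 : d % 4 = 2) (hω : ω * ω = d) :
    Ideal.absNorm (Ideal.span {2, ω}) = 2 := by
  have h2 : Ideal.absNorm (Ideal.span {(2 : 𝓞 K)}) = 2 ^ 2 := by
    rw [Ideal.absNorm_span_singleton, ← map_ofNat (algebraMap ℤ (𝓞 K)) 2, Algebra.norm_algebraMap,
      RingOfIntegers.rank, hK]
    rfl
  have h : Ideal.absNorm (Ideal.span {2, ω}) ^ 2 = 2 ^ 2 := by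
    rw [← map_pow, span_two_omega_sq hd4 hω, h2]
  exact Nat.pow_left_injective two_ne_zero h

lemma absNorm_span_ringOfIntegersHom (hK : Module.finrank ℚ K = 2) (hd : ¬IsSquare (d : ℚ))
    (hω : ω * ω = d) (z : QuadraticAlgebra ℤ d 0) :
    Ideal.absNorm (Ideal.span {ringOfIntegersHom hω z}) = (z.re ^ 2 - d * z.im ^ 2).natAbs := by
  rw [Ideal.absNorm_span_singleton, norm_ringOfIntegersHom hK hd]

lemma ringOfIntegersHom_mem_span_two_omega_iff (hK : Module.finrank ℚ K = 2) (hd : Squarefree d)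
    (hd4 : d % 4 = 2) (hω : ω * ω = d) (z : QuadraticAlgebra ℤ d 0) :
    ringOfIntegersHom hω z ∈ Ideal.span {2, ω} ↔ Even z.re := by
  have hsurj := ringOfIntegersHom_surjective hK hd (Or.inl hd4) hω
  constructor
  · rw [Ideal.mem_span_pair]
    rintro ⟨a, b, hab⟩
    obtain ⟨a, rfl⟩ := hsurj a
    obtain ⟨b, rfl⟩ := hsurj b
    have hz : a * 2 + b * ⟨0, 1⟩ = z := by
      apply ringOfIntegersHom_injective (not_isSquare_of_emod_four (Or.inl hd4)) hω
      rw [← hab, map_add, map_mul, map_mul, map_ofNat, ringOfIntegersHom_apply hω ⟨0, 1⟩]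
      simp
    have hd2 : Even d := ⟨2 * (d / 4) + 1, by omega⟩
    rw [← hz]
    simp [Int.even_add, hd2]
  · rintro ⟨m, hm⟩
    refine Ideal.mem_span_pair.mpr ⟨m, z.im, ?_⟩
    rw [ringOfIntegersHom_apply, hm]
    push_cast
    ring

lemma ringOfIntegersHom_mem_span_two_iff (hK : Module.finrank ℚ K = 2) (hd : Squarefree d)
    (hd4 : d % 4 = 2 ∨ d % 4 = 3) (hω : ω * ω = d) (z : QuadraticAlgebra ℤ d 0) :
    ringOfIntegersHom hω z ∈ Ideal.span {(2 : 𝓞 K)} ↔ Even z.re ∧ Even z.im := by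
  constructor
  · rw [Ideal.mem_span_singleton']
    rintro ⟨a, ha⟩
    obtain ⟨a, rfl⟩ := ringOfIntegersHom_surjective hK hd hd4 hω a
    have hz : a * 2 = z := by
      apply ringOfIntegersHom_injective (not_isSquare_of_emod_four hd4) hω
      rw [← ha, map_mul, map_ofNat]
    rw [← hz]
    simp
  · rintro ⟨⟨m, hm⟩, ⟨n, hn⟩⟩
    refine Ideal.mem_span_singleton'.mpr ⟨m + n * ω, ?_⟩
    rw [ringOfIntegersHom_apply, hm, hn]
    push_cast
    ring

end RamifiedPrime

section PrimeAboveTwo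

variable {K : Type*} [Field K] [NumberField K] {d : ℤ} {ω : 𝓞 K}
  {v : HeightOneSpectrum (𝓞 K)}

lemma weightedNorm_two (hK : Module.finrank ℚ K = 2) (hd4 : d % 4 = 2) (hω : ω * ω = d)
    (hv : v.asIdeal = Ideal.span {2, ω}) (c : ℝ) : weightedNorm v c 2 = c ^ 2 := by
  have hP := absNorm_span_two_omega hK hd4 hω
  have h2 : Ideal.absNorm (Ideal.span {(2 : 𝓞 K)}) = 4 := by
    rw [← span_two_omega_sq hd4 hω, map_pow, hP]
    rfl
  have hmem : (2 : 𝓞 K) ∈ v.asIdeal ^ 2 := by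
    rw [hv, span_two_omega_sq hd4 hω]
    exact Ideal.mem_span_singleton_self 2
  have hnotMem : (2 : 𝓞 K) ∉ v.asIdeal ^ (2 + 1) := by
    intro h
    have := Ideal.absNorm_dvd_absNorm_of_le ((Ideal.span_singleton_le_iff_mem _).mpr h)
    rw [h2, map_pow, hv, hP] at this
    norm_num at this
  rw [← map_ofNat (algebraMap (𝓞 K) K) 2,
    weightedNorm_algebraMap_of_mem_pow_of_notMem v two_ne_zero hmem hnotMem, h2, hv, hP]
  ring

lemma weightedNorm_ringOfIntegersHom_of_odd (hK : Module.finrank ℚ K = 2) (hd : Squarefree d)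
    (hd4 : d % 4 = 2) (hω : ω * ω = d) (hv : v.asIdeal = Ideal.span {2, ω}) (c : ℝ)
    {z : QuadraticAlgebra ℤ d 0} (hre : Odd z.re) :
    weightedNorm v c (algebraMap (𝓞 K) K (ringOfIntegersHom hω z)) =
      |((z.re ^ 2 - d * z.im ^ 2 : ℤ) : ℝ)| := by
  have hz : ringOfIntegersHom hω z ≠ 0 := ringOfIntegersHom_ne_zero
    (not_isSquare_of_emod_four (Or.inl hd4)) hω (by rintro rfl; simp at hre)
  have hnotMem : ringOfIntegersHom hω z ∉ v.asIdeal ^ (0 + 1) := by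
    rw [zero_add, pow_one, hv, ringOfIntegersHom_mem_span_two_omega_iff hK hd hd4]
    exact Int.not_even_iff_odd.mpr hre
  rw [weightedNorm_algebraMap_of_mem_pow_of_notMem v hz (by simp) hnotMem,
    absNorm_span_ringOfIntegersHom hK (not_isSquare_of_emod_four (Or.inl hd4)), pow_zero, mul_one,
    Nat.cast_natAbs, Int.cast_abs]


lemma weightedNorm_ringOfIntegersHom_of_even_of_odd (hK : Module.finrank ℚ K = 2)
    (hd : Squarefree d) (hd4 : d % 4 = 2) (hω : ω * ω = d) (hv : v.asIdeal = Ideal.span {2, ω})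
    (c : ℝ) {z : QuadraticAlgebra ℤ d 0} (hre : Even z.re) (him : Odd z.im) :
    weightedNorm v c (algebraMap (𝓞 K) K (ringOfIntegersHom hω z)) =
      |((z.re ^ 2 - d * z.im ^ 2 : ℤ) : ℝ)| * (c / 2) := by
  have hz : ringOfIntegersHom hω z ≠ 0 := ringOfIntegersHom_ne_zero
    (not_isSquare_of_emod_four (Or.inl hd4)) hω (by rintro rfl; simp at him)
  have hmem : ringOfIntegersHom hω z ∈ v.asIdeal ^ 1 := by
    rwa [pow_one, hv, ringOfIntegersHom_mem_span_two_omega_iff hK hd hd4]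
  have hnotMem : ringOfIntegersHom hω z ∉ v.asIdeal ^ (1 + 1) := by
    rw [hv, span_two_omega_sq hd4 hω, ringOfIntegersHom_mem_span_two_iff hK hd (Or.inl hd4)]
    exact fun h => Int.not_even_iff_odd.mpr him h.2
  rw [weightedNorm_algebraMap_of_mem_pow_of_notMem v hz hmem hnotMem,
    absNorm_span_ringOfIntegersHom hK (not_isSquare_of_emod_four (Or.inl hd4)), pow_one, hv,
    absNorm_span_two_omega hK hd4 hω, Nat.cast_natAbs, Int.cast_abs]
  norm_num

lemma sq_le_weightedNorm_ringOfIntegersHom_of_even_of_even (hK : Module.finrank ℚ K = 2)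
    (hd : Squarefree d) (hd4 : d % 4 = 2) (hω : ω * ω = d) (hv : v.asIdeal = Ideal.span {2, ω})
    {c : ℝ} (hc : 1 ≤ c) {z : QuadraticAlgebra ℤ d 0} (hz : z ≠ 0) (hre : Even z.re)
    (him : Even z.im) : c ^ 2 ≤ weightedNorm v c (algebraMap (𝓞 K) K (ringOfIntegersHom hω z)) := by
  refine pow_le_weightedNorm_algebraMap_of_mem_pow v hc ?_ ?_
  · exact ringOfIntegersHom_ne_zero (not_isSquare_of_emod_four (Or.inl hd4)) hω hz
  · rw [hv, span_two_omega_sq hd4 hω, ringOfIntegersHom_mem_span_two_iff hK hd (Or.inl hd4)]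
    exact ⟨hre, him⟩

end PrimeAboveTwo

lemma sq_emod_eight_of_odd {x : ℤ} (hx : Odd x) : x ^ 2 % 8 = 1 := by
  obtain ⟨k, rfl⟩ := hx
  rcases Int.even_or_odd' k with ⟨m, rfl | rfl⟩ <;> ring_nf <;> omega

lemma sq_emod_eight_of_even {x : ℤ} (hx : Even x) : x ^ 2 % 8 = 0 ∨ x ^ 2 % 8 = 4 := by
  obtain ⟨k, rfl⟩ := hx
  rcases Int.even_or_odd' k with ⟨m, rfl | rfl⟩ <;> ring_nf <;> omega

lemma sq_emod_seven (x : ℤ) : x ^ 2 % 7 = 0 ∨ x ^ 2 % 7 = 1 ∨ x ^ 2 % 7 = 2 ∨ x ^ 2 % 7 = 4 := by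
  obtain ⟨q, r, hr, hr', rfl⟩ : ∃ q r, 0 ≤ r ∧ r < 7 ∧ x = 7 * q + r :=
    ⟨x / 7, x % 7, by omega, by omega, by omega⟩
  interval_cases r <;> ring_nf <;> omega

lemma five_le_abs_sq_sub_fourteen_mul_sq {x y : ℤ} (hx : Odd x) (hy : Odd y) :
    5 ≤ |x ^ 2 - 14 * y ^ 2| := by
  have := sq_emod_eight_of_odd hx
  have := sq_emod_eight_of_odd hy
  have := sq_emod_seven x
  rw [le_abs']
  omega

lemma seven_le_abs_sq_sub_fourteen_mul_sq {x y : ℤ} (hx : Odd x) (hx7 : x % 7 = 2) :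
    7 ≤ |x ^ 2 - 14 * y ^ 2| := by
  have := sq_emod_eight_of_odd hx
  have : y ^ 2 % 8 = 0 ∨ y ^ 2 % 8 = 1 ∨ y ^ 2 % 8 = 4 := by
    rcases Int.even_or_odd y with hy | hy
    · rcases sq_emod_eight_of_even hy with h | h <;> simp [h]
    · simp [sq_emod_eight_of_odd hy]
  obtain ⟨q, rfl⟩ : ∃ q, x = 7 * q + 2 := ⟨x / 7, by omega⟩
  rw [le_abs']
  ring_nf at *
  omega

lemma ten_le_abs_sq_sub_fourteen_mul_sq {x y : ℤ} (hx : Even x) (hy : Odd y) (hx7 : x % 7 = 2) :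
    10 ≤ |x ^ 2 - 14 * y ^ 2| := by
  have := sq_emod_eight_of_even hx
  have := sq_emod_eight_of_odd hy
  obtain ⟨q, rfl⟩ : ∃ q, x = 7 * q + 2 := ⟨x / 7, by omega⟩
  rw [le_abs']
  ring_nf at *
  omega

section Sqrt14

variable {K : Type*} [Field K] [NumberField K] {ω : 𝓞 K} {v : HeightOneSpectrum (𝓞 K)}

lemma squarefree_fourteen : Squarefree (14 : ℤ) := by
  refine Int.squarefree_natCast.mpr ?_
  rw [Nat.squarefree_iff_nodup_primeFactorsList (by norm_num)]
  norm_num [Nat.primeFactorsList]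

lemma sqrt_five_lt_of_isEuclideanFunction (hK : Module.finrank ℚ K = 2)
    (hω : ω * ω = ((14 : ℤ) : 𝓞 K)) (hv : v.asIdeal = Ideal.span {2, ω}) {c : ℝ} (hc : 0 < c)
    (hE : IsEuclideanFunction (weightedNorm v c)) : √5 < c := by
  obtain ⟨z, hz⟩ := hE.exists_lt_of_surjective
    (ringOfIntegersHom_surjective hK squarefree_fourteen (by norm_num) hω) ⟨1, 1⟩ 2
    (by rw [map_ofNat]; exact two_ne_zero)
  set w : QuadraticAlgebra ℤ 14 0 := ⟨1, 1⟩ - 2 * z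
  have hre : Odd w.re := ⟨-z.re, by simp [w]; ring⟩
  have him : Odd w.im := ⟨-z.im, by simp [w]; ring⟩
  rw [map_ofNat, map_ofNat, weightedNorm_two hK (by norm_num) hω hv,
    weightedNorm_ringOfIntegersHom_of_odd hK squarefree_fourteen (by norm_num) hω hv c hre] at hz
  have h5 : (5 : ℝ) ≤ |((w.re ^ 2 - 14 * w.im ^ 2 : ℤ) : ℝ)| := by
    exact_mod_cast five_le_abs_sq_sub_fourteen_mul_sq hre him
  exact (Real.sqrt_lt' hc).mpr (h5.trans_lt hz)

lemma seven_le_weightedNorm_of_emod_seven (hK : Module.finrank ℚ K = 2)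
    (hω : ω * ω = ((14 : ℤ) : 𝓞 K)) (hv : v.asIdeal = Ideal.span {2, ω}) {c : ℝ} (hc : 2 ≤ c)
    (hc7 : 7 ≤ c ^ 2) {z : QuadraticAlgebra ℤ 14 0} (hz : z.re % 7 = 2) :
    7 ≤ weightedNorm v c (algebraMap (𝓞 K) K (ringOfIntegersHom hω z)) := by
  have hd4 : (14 : ℤ) % 4 = 2 := by norm_num
  rcases Int.even_or_odd z.re with hre | hre
  · rcases Int.even_or_odd z.im with him | him
    · refine hc7.trans (sq_le_weightedNorm_ringOfIntegersHom_of_even_of_even hK squarefree_fourteen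
        hd4 hω hv (by linarith) ?_ hre him)
      rintro rfl
      simp at hz
    · rw [weightedNorm_ringOfIntegersHom_of_even_of_odd hK squarefree_fourteen hd4 hω hv c hre him]
      have h10 : (10 : ℝ) ≤ |((z.re ^ 2 - 14 * z.im ^ 2 : ℤ) : ℝ)| := by
        exact_mod_cast ten_le_abs_sq_sub_fourteen_mul_sq hre him hz
      nlinarith
  · rw [weightedNorm_ringOfIntegersHom_of_odd hK squarefree_fourteen hd4 hω hv c hre]
    exact_mod_cast seven_le_abs_sq_sub_fourteen_mul_sq hre hz

lemma lt_sqrt_seven_of_isEuclideanFunction (hK : Module.finrank ℚ K = 2)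
    (hω : ω * ω = ((14 : ℤ) : 𝓞 K)) (hv : v.asIdeal = Ideal.span {2, ω}) {c : ℝ}
    (hE : IsEuclideanFunction (weightedNorm v c)) : c < √7 := by
  by_contra! h
  have hc7 : 7 ≤ c ^ 2 := (Real.sqrt_le_left ((Real.sqrt_nonneg 7).trans h)).mp h
  have hc : 2 ≤ c := by nlinarith [(Real.sqrt_nonneg 7).trans h]
  obtain ⟨z, hz⟩ := hE.exists_lt_of_surjective
    (ringOfIntegersHom_surjective hK squarefree_fourteen (by norm_num) hω) 2 ⟨7, 2⟩
    (ringOfIntegersHom_ne_zero (not_isSquare_of_emod_four (by norm_num)) hω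
      (fun h => by simpa using congrArg QuadraticAlgebra.re h))
  rw [weightedNorm_ringOfIntegersHom_of_odd hK squarefree_fourteen (by norm_num) hω hv c
    (z := ⟨7, 2⟩) ⟨3, by norm_num⟩] at hz
  refine (seven_le_weightedNorm_of_emod_seven hK hω hv hc hc7 ?_).not_gt (hz.trans_le (by norm_num))
  simp
  omega

end Sqrt14

/-- For `K = ℚ(√14)` and `𝔭 = (2, √14)`:  if `f_{𝔭,c}` is a Euclidean function on `𝓞 K`,
then `√5 < c < √7`; i.e. the Euclidean window satisfies `w(𝔭) ⊆ (√5, √7)`. -/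
theorem euclidean_window_sqrt14 {K : Type*} [Field K] [NumberField K]
    (sqrt14 : K) (hs : sqrt14 ^ 2 = 14) (hdeg : Module.finrank ℚ K = 2)
    (ω : 𝓞 K) (hω : (ω : K) = sqrt14)
    (hP : (Ideal.span {2, ω} : Ideal (𝓞 K)).IsPrime)
    (h0 : (Ideal.span {2, ω} : Ideal (𝓞 K)) ≠ ⊥)
    (c : ℝ) (hc : 0 < c)
    (hE : IsEuclideanFunction (weightedNorm ⟨Ideal.span {2, ω}, hP, h0⟩ c)) :
    Real.sqrt 5 < c ∧ c < Real.sqrt 7 := by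
  have hω14 : ω * ω = ((14 : ℤ) : 𝓞 K) := by
    apply RingOfIntegers.coe_injective
    rw [map_mul, map_intCast, ← RingOfIntegers.coe_eq_algebraMap, hω, ← sq, hs, Int.cast_ofNat]
  exact ⟨sqrt_five_lt_of_isEuclideanFunction hdeg hω14 rfl hc hE,
    lt_sqrt_seven_of_isEuclideanFunction hdeg hω14 rfl hE⟩
end

section
/- Let K = ℚ(√14) with ring of integers O_K = ℤ[√14], and let 𝔭 be a prime ideal of O_K whose absolute norm N𝔭 is a prime number p with p ≡ 1 (mod 8) or p ≡ 7 (mod 8). Then for no real number c > 0 is the weighted norm f_{𝔭,c} a Euclidean function on O_K; that is, the Euclidean window w(𝔭) is empty. -/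
open scoped Classical

open NumberField IsDedekindDomain

/-!
For `c < 1` the window fails in every number field: a generator `β` of `𝔭 ^ h`, with `h` the
class number, has weight `c ^ h < 1`, while every remainder `1 - β q` is prime to `𝔭` and so has
weight `|N(1 - β q)| ≥ 1`.

For `c ≥ 1`, divide `1 + √14` by `2`. As `𝓞 K = ℤ[√14]`, every remainder is `u + w √14` with
`u, w` odd, of norm `N ≡ 3 (mod 8)`. Writing `|N| = p ^ n * C` with `n = v_𝔭`, the weight
`C * c ^ n` of the remainder is at least `C`. Now `C` is odd, `C ≠ 1` since `± p ^ n ≡ ± 1 (mod 8)`,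
and `C ≠ 3` since `3 ∣ N` forces `9 ∣ N` (`14` is not a square mod `3`) while `p ≠ 3`. Hence the
weight is at least `5 > 4 = f(2)`.
-/

open scoped nonZeroDivisors in
theorem Ideal.exists_span_singleton_eq_pow {R : Type*} [CommRing R] [IsDedekindDomain R]
    [Fintype (ClassGroup R)] {I : Ideal R} (hI : I ≠ ⊥) :
    ∃ h : ℕ, 0 < h ∧ ∃ β : R, Ideal.span {β} = I ^ h := by
  have hI' : I ∈ (Ideal R)⁰ := mem_nonZeroDivisors_of_ne_zero hI
  refine ⟨Fintype.card (ClassGroup R), Fintype.card_pos, ?_⟩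
  have hone : ClassGroup.mk0 (⟨I, hI'⟩ ^ Fintype.card (ClassGroup R)) = 1 := by
    rw [map_pow, pow_card_eq_one]
  obtain ⟨β, hβ⟩ := ((ClassGroup.mk0_eq_one_iff _).mp hone).principal
  exact ⟨β, by simpa using hβ.symm⟩

namespace IsDedekindDomain.HeightOneSpectrum

variable {K : Type*} [Field K] [NumberField K] (v : HeightOneSpectrum (𝓞 K))

theorem absNorm_ne_zero : Ideal.absNorm v.asIdeal ≠ 0 :=
  Ideal.absNorm_eq_zero_iff.not.mpr v.ne_bot

omit [NumberField K] in
theorem ne_zero_of_span_singleton_eq_pow {β : 𝓞 K} {n : ℕ}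
    (hβ : Ideal.span {β} = v.asIdeal ^ n) : β ≠ 0 := by
  rintro rfl
  exact pow_ne_zero n v.ne_bot (by simpa using hβ.symm)

theorem adicVal_coe {x : 𝓞 K} (hx : x ≠ 0) :
    adicVal v (x : K) = multiplicity v.asIdeal (Ideal.span {x}) := by
  have hxK : (x : K) ≠ 0 := RingOfIntegers.coe_ne_zero_iff.mpr hx
  have hval : v.valuation K x = WithZero.exp (-multiplicity v.asIdeal (Ideal.span {x}) : ℤ) := by
    rw [v.valuation_of_algebraMap, v.intValuation_eq_exp_neg_multiplicity hx]
  rw [adicVal, dif_neg hxK, WithZero.coe_inj.mp ((WithZero.coe_unzero _).trans hval)]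
  simp

theorem weightedNorm_coe (c : ℝ) {x : 𝓞 K} (hx : x ≠ 0) :
    weightedNorm v c x = Ideal.absNorm (Ideal.span {x}) *
      (c / Ideal.absNorm v.asIdeal) ^ multiplicity v.asIdeal (Ideal.span {x}) := by
  rw [weightedNorm, if_neg (RingOfIntegers.coe_ne_zero_iff.mpr hx), adicVal_coe v hx,
    zpow_natCast, Ideal.absNorm_span_singleton, ← Algebra.coe_norm_int, Nat.cast_natAbs]
  push_cast
  rfl

theorem weightedNorm_coe_of_notMem (c : ℝ) {x : 𝓞 K} (hx : x ∉ v.asIdeal) :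
    weightedNorm v c x = Ideal.absNorm (Ideal.span {x}) := by
  have hx0 : x ≠ 0 := fun h ↦ hx (h ▸ v.asIdeal.zero_mem)
  rw [weightedNorm_coe v c hx0, multiplicity_eq_zero.mpr (by rwa [Ideal.dvd_span_singleton]),
    pow_zero, mul_one]

theorem weightedNorm_coe_of_span_eq_pow (c : ℝ) {β : 𝓞 K} {n : ℕ}
    (hβ : Ideal.span {β} = v.asIdeal ^ n) : weightedNorm v c β = c ^ n := by
  have hp : (Ideal.absNorm v.asIdeal : ℝ) ≠ 0 := Nat.cast_ne_zero.mpr v.absNorm_ne_zero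
  rw [weightedNorm_coe v c (v.ne_zero_of_span_singleton_eq_pow hβ), hβ,
    multiplicity_pow_self_of_prime v.prime, map_pow, div_pow]
  push_cast
  field_simp

theorem exists_absNorm_eq_pow_mul_le_weightedNorm {c : ℝ} (hc : 1 ≤ c) {x : 𝓞 K} (hx : x ≠ 0) :
    ∃ n C : ℕ, Ideal.absNorm (Ideal.span {x}) = Ideal.absNorm v.asIdeal ^ n * C ∧
      (C : ℝ) ≤ weightedNorm v c x := by
  obtain ⟨C, hC⟩ := map_dvd Ideal.absNorm (pow_multiplicity_dvd v.asIdeal (Ideal.span {x}))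
  rw [map_pow] at hC
  refine ⟨_, C, hC, ?_⟩
  have hp : (Ideal.absNorm v.asIdeal : ℝ) ≠ 0 := Nat.cast_ne_zero.mpr v.absNorm_ne_zero
  calc (C : ℝ) ≤ C * c ^ multiplicity v.asIdeal (Ideal.span {x}) :=
        le_mul_of_one_le_right (Nat.cast_nonneg C) (one_le_pow₀ hc)
    _ = weightedNorm v c x := by
      rw [weightedNorm_coe v c hx, hC, div_pow]
      push_cast
      field_simp

theorem natCast_notMem_of_coprime {m : ℕ} (h : (Ideal.absNorm v.asIdeal).Coprime m) :
    (m : 𝓞 K) ∉ v.asIdeal := by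
  intro hm
  have hdvd := Ideal.absNorm_dvd_absNorm_of_le ((Ideal.span_singleton_le_iff_mem _).mpr hm)
  rw [Ideal.absNorm_span_natCast] at hdvd
  exact v.isPrime.ne_top (Ideal.absNorm_eq_one_iff.mp
    (Nat.Coprime.eq_one_of_dvd (h.pow_right _) hdvd))

theorem weightedNorm_natCast_of_coprime (c : ℝ) {m : ℕ}
    (h : (Ideal.absNorm v.asIdeal).Coprime m) :
    weightedNorm v c ((m : 𝓞 K) : K) = m ^ Module.finrank ℚ K := by
  rw [← RingOfIntegers.rank, weightedNorm_coe_of_notMem v c (v.natCast_notMem_of_coprime h),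
    Ideal.absNorm_span_natCast]
  push_cast
  rfl

theorem not_isEuclideanFunction_weightedNorm_of_lt_one {c : ℝ} (hc0 : 0 ≤ c) (hc1 : c < 1) :
    ¬ IsEuclideanFunction (weightedNorm v c) := by
  intro hE
  obtain ⟨h, hh, β, hβ⟩ := Ideal.exists_span_singleton_eq_pow v.ne_bot
  have hβv : β ∈ v.asIdeal :=
    Ideal.pow_le_self hh.ne' (hβ ▸ Ideal.mem_span_singleton_self β)
  obtain ⟨q, hq⟩ := hE 1 β (v.ne_zero_of_span_singleton_eq_pow hβ)
  have hr : 1 - β * q ∉ v.asIdeal := fun hr ↦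
    v.isPrime.ne_top ((Ideal.eq_top_iff_one _).mpr (by
      simpa using v.asIdeal.add_mem hr (v.asIdeal.mul_mem_right q hβv)))
  have hr0 : 1 - β * q ≠ 0 := fun h0 ↦ hr (h0 ▸ v.asIdeal.zero_mem)
  rw [show ((1 : 𝓞 K) : K) - β * q = ((1 - β * q : 𝓞 K) : K) by push_cast; rfl,
    weightedNorm_coe_of_notMem v c hr, weightedNorm_coe_of_span_eq_pow v c hβ] at hq
  have : (1 : ℝ) ≤ Ideal.absNorm (Ideal.span {1 - β * q}) := by
    exact_mod_cast Nat.one_le_iff_ne_zero.mpr (by simpa using hr0)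
  linarith [pow_lt_one₀ hc0 hc1 hh.ne']

end IsDedekindDomain.HeightOneSpectrum

namespace QuadraticField

variable {K : Type*} [Field K] [CharZero K] {d : ℚ} {s : K}

theorem linearIndependent_one_sqrt (hs : s ^ 2 = d) (hd : ¬ IsSquare d) :
    LinearIndependent ℚ ![(1 : K), s] := by
  rw [LinearIndependent.pair_iff]
  intro a b hab
  have hb : b = 0 := by
    by_contra hb
    apply hd
    refine ⟨-a / b, (Rat.cast_injective (α := K)) ?_⟩
    have hsab : s = ((-a / b : ℚ) : K) := by
      simp only [Rat.smul_def, mul_one] at hab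
      push_cast
      field_simp
      linear_combination hab
    rw [← hs, hsab]
    push_cast
    ring
  subst hb
  simpa using hab

variable (hs : s ^ 2 = d) (hd : ¬ IsSquare d) (hdeg : Module.finrank ℚ K = 2)
include hs hd hdeg

noncomputable def sqrtBasis : Module.Basis (Fin 2) ℚ K :=
  basisOfLinearIndependentOfCardEqFinrank (linearIndependent_one_sqrt hs hd) (by simp [hdeg])

theorem coe_sqrtBasis : ⇑(sqrtBasis hs hd hdeg) = ![1, s] :=
  coe_basisOfLinearIndependentOfCardEqFinrank _ _

theorem sqrtBasis_equivFun (a b : ℚ) :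
    (sqrtBasis hs hd hdeg).equivFun ((a : K) + b * s) = ![a, b] := by
  rw [← LinearEquiv.eq_symm_apply, Module.Basis.equivFun_symm_apply, Fin.sum_univ_two]
  simp [coe_sqrtBasis, Rat.smul_def]

theorem exists_rat_eq_add_mul_sqrt (x : K) : ∃ a b : ℚ, x = a + b * s := by
  refine ⟨(sqrtBasis hs hd hdeg).equivFun x 0, (sqrtBasis hs hd hdeg).equivFun x 1, ?_⟩
  conv_lhs => rw [← (sqrtBasis hs hd hdeg).equivFun.symm_apply_apply x]
  rw [Module.Basis.equivFun_symm_apply, Fin.sum_univ_two]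
  simp [coe_sqrtBasis, Rat.smul_def]

theorem leftMulMatrix_sqrtBasis (a b : ℚ) :
    Algebra.leftMulMatrix (sqrtBasis hs hd hdeg) ((a : K) + b * s) = !![a, d * b; b, a] := by
  have hmul : ((a : K) + b * s) * s = ((d * b : ℚ) : K) + a * s := by
    push_cast
    linear_combination (b : K) * hs
  ext i j
  rw [Algebra.leftMulMatrix_eq_repr_mul, ← Module.Basis.equivFun_apply, coe_sqrtBasis]
  fin_cases j
  · rw [Fin.zero_eta, Matrix.cons_val_zero, mul_one, sqrtBasis_equivFun hs hd hdeg]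
    fin_cases i <;> rfl
  · rw [Fin.mk_one, Matrix.cons_val_one, Matrix.cons_val_zero, hmul, sqrtBasis_equivFun hs hd hdeg]
    fin_cases i <;> rfl

theorem norm_add_mul_sqrt (a b : ℚ) : Algebra.norm ℚ ((a : K) + b * s) = a ^ 2 - d * b ^ 2 := by
  rw [Algebra.norm_eq_matrix_det (sqrtBasis hs hd hdeg), leftMulMatrix_sqrtBasis hs hd hdeg,
    Matrix.det_fin_two_of]
  ring

theorem trace_add_mul_sqrt (a b : ℚ) : Algebra.trace ℚ K ((a : K) + b * s) = 2 * a := by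
  rw [Algebra.trace_eq_matrix_trace (sqrtBasis hs hd hdeg), leftMulMatrix_sqrtBasis hs hd hdeg,
    Matrix.trace_fin_two_of]
  ring

end QuadraticField

namespace Sqrt14

theorem sq_sub_fourteen_mul_sq_emod_eight {u w : ℤ} (hu : Odd u) (hw : Odd w) :
    (u ^ 2 - 14 * w ^ 2) % 8 = 3 := by
  obtain ⟨i, rfl⟩ := hu
  obtain ⟨j, rfl⟩ := hw
  obtain ⟨e, he⟩ := Int.even_mul_succ_self i
  rw [show (2 * i + 1) ^ 2 - 14 * (2 * j + 1) ^ 2 = 4 * (i * (i + 1)) - 56 * (j * (j + 1)) - 13 by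
    ring, he]
  omega

theorem nine_dvd_of_three_dvd_sq_sub_fourteen_mul_sq {u w : ℤ} (h : 3 ∣ u ^ 2 - 14 * w ^ 2) :
    9 ∣ u ^ 2 - 14 * w ^ 2 := by
  have hmod : (u : ZMod 3) ^ 2 - 14 * (w : ZMod 3) ^ 2 = 0 := by
    simpa using (ZMod.intCast_zmod_eq_zero_iff_dvd _ 3).mpr h
  obtain ⟨hu, hw⟩ : (u : ZMod 3) = 0 ∧ (w : ZMod 3) = 0 :=
    (by decide : ∀ x y : ZMod 3, x ^ 2 - 14 * y ^ 2 = 0 → x = 0 ∧ y = 0) _ _ hmod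
  obtain ⟨u', rfl⟩ := (ZMod.intCast_zmod_eq_zero_iff_dvd u 3).mp hu
  obtain ⟨w', rfl⟩ := (ZMod.intCast_zmod_eq_zero_iff_dvd w 3).mp hw
  exact ⟨u' ^ 2 - 14 * w' ^ 2, by ring⟩

theorem pow_mod_eight_eq_one_or_seven {p : ℕ} (hp : p % 8 = 1 ∨ p % 8 = 7) (n : ℕ) :
    p ^ n % 8 = 1 ∨ p ^ n % 8 = 7 := by
  induction n with
  | zero => simp
  | succ n ih =>
    rw [pow_succ, Nat.mul_mod]
    rcases ih with h | h <;> rcases hp with h' | h' <;> simp [h, h']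

theorem five_le_of_natAbs_eq_pow_mul {p n C : ℕ} {u w : ℤ} (hp : p.Prime)
    (hmod : p % 8 = 1 ∨ p % 8 = 7) (hu : Odd u) (hw : Odd w)
    (h : (u ^ 2 - 14 * w ^ 2).natAbs = p ^ n * C) : 5 ≤ C := by
  have h8 := sq_sub_fourteen_mul_sq_emod_eight hu hw
  have habs : (p ^ n * C) % 8 = 3 ∨ (p ^ n * C) % 8 = 5 := by omega
  have hpow := pow_mod_eight_eq_one_or_seven hmod n
  have hC3 : C ≠ 3 := by
    rintro rfl
    have h9 : 9 ∣ p ^ n * 3 :=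
      h ▸ Int.natAbs_dvd_natAbs.mpr (nine_dvd_of_three_dvd_sq_sub_fourteen_mul_sq
        (Int.dvd_natAbs.mp (Int.natCast_dvd_natCast.mpr (h ▸ dvd_mul_left 3 _))))
    have h3 : 3 ∣ p := Nat.prime_three.dvd_of_dvd_pow
      (Nat.dvd_of_mul_dvd_mul_right three_pos (by simpa [mul_comm] using h9))
    have := (Nat.prime_dvd_prime_iff_eq Nat.prime_three hp).mp h3
    omega
  by_contra! hC
  interval_cases C <;> omega

-- `m, k, n` are `Tr x`, `Tr (√14 x)` and `N x` for `x = q₁ + q₂ √14`.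
theorem exists_int_eq_of_trace_norm {q₁ q₂ : ℚ} {m k n : ℤ} (hm : (m : ℚ) = 2 * q₁)
    (hk : (k : ℚ) = 28 * q₂) (hn : (n : ℚ) = q₁ ^ 2 - 14 * q₂ ^ 2) :
    ∃ a b : ℤ, q₁ = a ∧ q₂ = b := by
  have hmk : k ^ 2 = 14 * (m ^ 2 - 4 * n) := by
    have : ((k ^ 2 : ℤ) : ℚ) = ((14 * (m ^ 2 - 4 * n) : ℤ) : ℚ) := by
      push_cast
      rw [hm, hk, hn]
      ring
    exact_mod_cast this
  have h2k : 2 ∣ k := Int.prime_two.dvd_of_dvd_pow (n := 2) ⟨7 * (m ^ 2 - 4 * n), by linarith⟩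
  have h7k : (7 : ℤ) ∣ k :=
    (Int.prime_iff_natAbs_prime.mpr (by norm_num)).dvd_of_dvd_pow (n := 2)
      ⟨2 * (m ^ 2 - 4 * n), by linarith⟩
  obtain ⟨k', rfl⟩ : 14 ∣ k := by omega
  obtain ⟨m', rfl⟩ : 2 ∣ m :=
    Int.prime_two.dvd_of_dvd_pow (n := 2) ⟨7 * k' ^ 2 + 2 * n, by linarith⟩
  obtain ⟨b, rfl⟩ : 2 ∣ k' :=
    Int.prime_two.dvd_of_dvd_pow (n := 2) ⟨m' ^ 2 - n - 3 * k' ^ 2, by linarith⟩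
  exact ⟨m', b, by push_cast at hm; linarith, by push_cast at hk; linarith⟩

theorem not_isSquare_fourteen : ¬ IsSquare (14 : ℚ) := by
  norm_num [Rat.isSquare_iff]

variable {K : Type*} [Field K] {s : K} (hs : s ^ 2 = 14)
include hs

theorem isIntegral_sqrt : IsIntegral ℤ s :=
  ⟨Polynomial.X ^ 2 - Polynomial.C 14, Polynomial.monic_X_pow_sub_C _ two_ne_zero, by simp [hs]⟩

theorem sq_eq_ratCast : s ^ 2 = ((14 : ℚ) : K) := by
  rw [hs]
  norm_num

variable [NumberField K] (hdeg : Module.finrank ℚ K = 2)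
include hdeg

theorem exists_int_eq_add_mul_sqrt (x : 𝓞 K) : ∃ a b : ℤ, (x : K) = a + b * s := by
  have hs' := sq_eq_ratCast hs
  have hd := not_isSquare_fourteen
  obtain ⟨q₁, q₂, hx⟩ := QuadraticField.exists_rat_eq_add_mul_sqrt hs' hd hdeg (x : K)
  have htrace (y : 𝓞 K) : ∃ m : ℤ, (m : ℚ) = Algebra.trace ℚ K y :=
    ⟨_, Algebra.algebraMap_intTrace (A := ℤ) (K := ℚ) (L := K) (B := 𝓞 K) y⟩
  obtain ⟨m, hm⟩ := htrace x
  obtain ⟨k, hk⟩ := htrace (⟨s, isIntegral_sqrt hs⟩ * x)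
  have hsx : ((⟨s, isIntegral_sqrt hs⟩ * x : 𝓞 K) : K) = ((14 * q₂ : ℚ) : K) + q₁ * s := by
    change s * (x : K) = _
    rw [hx]
    push_cast
    linear_combination (q₂ : K) * hs
  rw [hx, QuadraticField.trace_add_mul_sqrt hs' hd hdeg] at hm
  rw [hsx, QuadraticField.trace_add_mul_sqrt hs' hd hdeg] at hk
  have hn := Algebra.coe_norm_int x
  rw [hx, QuadraticField.norm_add_mul_sqrt hs' hd hdeg] at hn
  obtain ⟨a, b, rfl, rfl⟩ := exists_int_eq_of_trace_norm hm (by rw [hk]; ring) hn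
  exact ⟨a, b, by rw [hx]; push_cast; rfl⟩

theorem absNorm_span_singleton_eq {x : 𝓞 K} {a b : ℤ} (hx : (x : K) = a + b * s) :
    Ideal.absNorm (Ideal.span {x}) = (a ^ 2 - 14 * b ^ 2).natAbs := by
  have hn := Algebra.coe_norm_int x
  rw [show (x : K) = ((a : ℚ) : K) + ((b : ℚ) : K) * s by push_cast; exact hx,
    QuadraticField.norm_add_mul_sqrt (sq_eq_ratCast hs) not_isSquare_fourteen hdeg] at hn
  rw [Ideal.absNorm_span_singleton]
  congr 1
  exact_mod_cast hn

theorem not_isEuclideanFunction_weightedNorm_of_one_le (v : HeightOneSpectrum (𝓞 K))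
    (hp : (Ideal.absNorm v.asIdeal).Prime)
    (hmod : Ideal.absNorm v.asIdeal % 8 = 1 ∨ Ideal.absNorm v.asIdeal % 8 = 7)
    {c : ℝ} (hc : 1 ≤ c) : ¬ IsEuclideanFunction (weightedNorm v c) := by
  intro hE
  obtain ⟨q, hq⟩ := hE (1 + ⟨s, isIntegral_sqrt hs⟩) 2 two_ne_zero
  obtain ⟨a, b, hab⟩ := exists_int_eq_add_mul_sqrt hs hdeg q
  set r : 𝓞 K := 1 + ⟨s, isIntegral_sqrt hs⟩ - 2 * q
  have hr : (r : K) = ((1 - 2 * a : ℤ) : K) + ((1 - 2 * b : ℤ) : K) * s := by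
    change 1 + s - 2 * (q : K) = _
    rw [hab]
    push_cast
    ring
  have hodd (z : ℤ) : Odd (1 - 2 * z) := ⟨-z, by ring⟩
  have hNr := absNorm_span_singleton_eq hs hdeg hr
  have hr0 : r ≠ 0 := by
    rintro hr0
    have h8 := sq_sub_fourteen_mul_sq_emod_eight (hodd a) (hodd b)
    rw [hr0, Ideal.span_singleton_eq_bot.mpr rfl, Ideal.absNorm_bot] at hNr
    omega
  obtain ⟨n, C, hC, hCr⟩ := v.exists_absNorm_eq_pow_mul_le_weightedNorm hc hr0
  have hC5 := five_le_of_natAbs_eq_pow_mul hp hmod (hodd a) (hodd b) (hNr ▸ hC)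
  have h2 : weightedNorm v c ((2 : 𝓞 K) : K) = 4 := by
    have hp_odd : Odd (Ideal.absNorm v.asIdeal) := hp.odd_of_ne_two (by omega)
    simpa [hdeg, show (2 : ℝ) ^ 2 = 4 by norm_num] using
      v.weightedNorm_natCast_of_coprime c (Nat.coprime_two_right.mpr hp_odd)
  rw [show ((1 + ⟨s, isIntegral_sqrt hs⟩ : 𝓞 K) : K) - ((2 : 𝓞 K) : K) * q = r from rfl,
    h2] at hq
  have : (5 : ℝ) ≤ C := by exact_mod_cast hC5
  linarith

end Sqrt14

/-- For `K = ℚ(√14)` and a prime ideal `𝔭` whose norm is a prime `p ≡ ±1 (mod 8)`,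
the weighted norm `f_{𝔭,c}` is never a Euclidean function on `𝓞 K`:  `w(𝔭) = ∅`. -/
theorem euclidean_window_empty_sqrt14 {K : Type*} [Field K] [NumberField K]
    (sqrt14 : K) (hs : sqrt14 ^ 2 = 14) (hdeg : Module.finrank ℚ K = 2)
    (P : Ideal (𝓞 K)) (hP : P.IsPrime) (h0 : P ≠ ⊥)
    (hnorm : (Ideal.absNorm P).Prime)
    (hmod : Ideal.absNorm P % 8 = 1 ∨ Ideal.absNorm P % 8 = 7)
    (c : ℝ) (hc : 0 < c) :
    ¬ IsEuclideanFunction (weightedNorm ⟨P, hP, h0⟩ c) := by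
  rcases lt_or_ge c 1 with hc1 | hc1
  · exact HeightOneSpectrum.not_isEuclideanFunction_weightedNorm_of_lt_one ⟨P, hP, h0⟩ hc.le hc1
  · exact Sqrt14.not_isEuclideanFunction_weightedNorm_of_one_le hs hdeg ⟨P, hP, h0⟩ hnorm hmod hc1
end

section
/- For each integer r ≥ 0 let P_r ∈ ℝ² be the point with pair (ε^{−r} + (4/23)√69, −(4/23)√69), and let P_r' ∈ ℝ² be the point with pair (−(4/23)√69, ε^{−r} + (4/23)√69). Then for every r ≥ 0: (i) the point with pair (ε^{−r}·(1 + (4/23)√69), ε^{r}·(−(4/23)√69)) differs from P_r by an element of the lattice Λ; and (ii) the point with pair (ε^{r}·(1 + (4/23)√69), ε^{−r}·(−(4/23)√69)) differs from −P_r' by an element of Λ. Equivalently, the orbit of P_0 under componentwise multiplication by powers of (ε, ε') is represented modulo Λ by the points ±P_r, ±P_r' with r ≥ 0. -/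
/-!
With `θ = (4/23)√69`, both differences are images of elements of `K`: (i) is
`(ε^{-r} - 1) θ` and (ii) is `ε^r + (ε^r - 1) θ`. Now `(ε - 1) θ = 18 + 2√69` and
`(ε⁻¹ - 1) θ = -18 + 2√69` are integral, and `ε^r - 1` is a multiple of `ε - 1` in `𝓞 K`,
so `(ε^{±r} - 1) θ ∈ 𝓞 K`. Working in `ℝ × ℝ` with componentwise multiplication, `Λ` is a
subring and all of this happens inside it.
-/

noncomputable section

/-- `√69` as a real number. -/
def s69 : ℝ := Real.sqrt 69

/-- The fundamental unit `ε = (25 + 3√69)/2` of `ℚ(√69)`, as a real number. -/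
def eps69 : ℝ := (25 + 3 * s69) / 2

/-- The lattice `Λ ⊂ ℝ²`: the image of `𝓞 K = ℤ[(1+√69)/2]` in pair coordinates
`α ↦ (α, α')`, i.e. all pairs `(a + b(1+√69)/2, a + b(1−√69)/2)` with `a, b ∈ ℤ`. -/
def Lambda69 : Set (ℝ × ℝ) :=
  {P | ∃ a b : ℤ, P.1 = a + b * ((1 + s69) / 2) ∧ P.2 = a + b * ((1 - s69) / 2)}

/-- The point `P_r`, in pair coordinates `(ε^{-r} + (4/23)√69, −(4/23)√69)`. -/
def P69 (r : ℕ) : ℝ × ℝ := (eps69 ^ (-(r : ℤ)) + (4 / 23) * s69, -(4 / 23) * s69)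

/-- The point `P_r'`, in pair coordinates `(−(4/23)√69, ε^{-r} + (4/23)√69)`. -/
def P69' (r : ℕ) : ℝ × ℝ := (-(4 / 23) * s69, eps69 ^ (-(r : ℤ)) + (4 / 23) * s69)

section QuadraticSubring

variable {A : Type*} [CommRing A]

def quadraticSubring (ω : A) (c e : ℤ) (hω : ω * ω = c + e * ω) : Subring A where
  carrier := {x | ∃ a b : ℤ, x = a + b * ω}
  mul_mem' := by
    rintro _ _ ⟨a, b, rfl⟩ ⟨a', b', rfl⟩
    refine ⟨a * a' + c * b * b', a * b' + b * a' + e * b * b', ?_⟩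
    push_cast
    linear_combination (b * b' : A) * hω
  one_mem' := ⟨1, 0, by simp⟩
  add_mem' := by
    rintro _ _ ⟨a, b, rfl⟩ ⟨a', b', rfl⟩
    exact ⟨a + a', b + b', by push_cast; ring⟩
  zero_mem' := ⟨0, 0, by simp⟩
  neg_mem' := by
    rintro _ ⟨a, b, rfl⟩
    exact ⟨-a, -b, by push_cast; ring⟩

theorem mem_quadraticSubring {ω : A} {c e : ℤ} {hω : ω * ω = c + e * ω} {x : A} :
    x ∈ quadraticSubring ω c e hω ↔ ∃ a b : ℤ, x = a + b * ω :=
  Iff.rfl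

end QuadraticSubring

theorem Subring.pow_sub_one_mul_mem {R : Type*} [CommRing R] (S : Subring R) {x : R}
    (hx : x ∈ S) {θ : R} (hθ : (x - 1) * θ ∈ S) (n : ℕ) : (x ^ n - 1) * θ ∈ S := by
  rw [← geom_sum_mul, mul_assoc]
  exact S.mul_mem (S.sum_mem fun i _ => S.pow_mem hx i) hθ

theorem s69_mul_self : s69 * s69 = 69 :=
  Real.mul_self_sqrt (by norm_num)

theorem eps69_inv : eps69⁻¹ = (25 - 3 * s69) / 2 := by
  refine inv_eq_of_mul_eq_one_right ?_
  unfold eps69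
  linear_combination (-9 / 4 : ℝ) * s69_mul_self

def omega69 : ℝ × ℝ := ((1 + s69) / 2, (1 - s69) / 2)

theorem omega69_mul_self : omega69 * omega69 = (17 : ℤ) + (1 : ℤ) * omega69 := by
  ext <;> simp only [omega69, Prod.fst_mul, Prod.snd_mul, Prod.fst_add, Prod.snd_add,
    Prod.fst_intCast, Prod.snd_intCast] <;> push_cast <;>
    linear_combination (1 / 4 : ℝ) * s69_mul_self

def lattice69 : Subring (ℝ × ℝ) := quadraticSubring omega69 17 1 omega69_mul_self

theorem mem_lattice69 {P : ℝ × ℝ} : P ∈ lattice69 ↔ P ∈ Lambda69 := by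
  simp only [lattice69, mem_quadraticSubring, Lambda69, Set.mem_ofPred_eq, Prod.ext_iff,
    omega69, Prod.fst_add, Prod.snd_add, Prod.fst_mul, Prod.snd_mul, Prod.fst_intCast,
    Prod.snd_intCast]

theorem mk_mem_lattice69 (a b : ℤ) :
    ((a + b * ((1 + s69) / 2) : ℝ), (a + b * ((1 - s69) / 2) : ℝ)) ∈ lattice69 :=
  mem_lattice69.2 ⟨a, b, rfl, rfl⟩

def theta69 : ℝ × ℝ := ((4 / 23) * s69, -(4 / 23) * s69)

theorem eps69_mem_lattice69 : ((eps69, eps69⁻¹) : ℝ × ℝ) ∈ lattice69 := by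
  convert mk_mem_lattice69 11 3 using 1
  rw [eps69_inv, eps69]
  ext <;> push_cast <;> ring

theorem eps69_inv_mem_lattice69 : ((eps69⁻¹, eps69) : ℝ × ℝ) ∈ lattice69 := by
  convert mk_mem_lattice69 14 (-3) using 1
  rw [eps69_inv, eps69]
  ext <;> push_cast <;> ring

theorem eps69_sub_one_mul_theta69_mem :
    (((eps69, eps69⁻¹) : ℝ × ℝ) - 1) * theta69 ∈ lattice69 := by
  convert mk_mem_lattice69 16 4 using 1
  rw [eps69_inv, eps69, theta69]
  ext <;> simp only [Prod.fst_mul, Prod.snd_mul, Prod.fst_sub, Prod.snd_sub, Prod.fst_one,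
    Prod.snd_one] <;> push_cast <;> linear_combination (6 / 23 : ℝ) * s69_mul_self

theorem eps69_inv_sub_one_mul_theta69_mem :
    (((eps69⁻¹, eps69) : ℝ × ℝ) - 1) * theta69 ∈ lattice69 := by
  convert mk_mem_lattice69 (-20) 4 using 1
  rw [eps69_inv, eps69, theta69]
  ext <;> simp only [Prod.fst_mul, Prod.snd_mul, Prod.fst_sub, Prod.snd_sub, Prod.fst_one,
    Prod.snd_one] <;> push_cast <;> linear_combination (-6 / 23 : ℝ) * s69_mul_self

/-- The orbit of `P₀` (with pair `(1 + (4/23)√69, −(4/23)√69)`) under componentwise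
multiplication by powers of `(ε, ε')` is represented modulo the lattice `Λ` by the
points `±P_r, ±P_r'` with `r ≥ 0`:  `ε^{-r}·P₀ ≡ P_r` and `ε^{r}·P₀ ≡ −P_r' (mod Λ)`. -/
theorem orbit_P0_sqrt69 :
    ∀ r : ℕ,
      ((eps69 ^ (-(r : ℤ)) * (1 + (4 / 23) * s69), eps69 ^ (r : ℤ) * (-(4 / 23) * s69))
          - P69 r) ∈ Lambda69 ∧
      ((eps69 ^ (r : ℤ) * (1 + (4 / 23) * s69), eps69 ^ (-(r : ℤ)) * (-(4 / 23) * s69))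
          - (-(P69' r))) ∈ Lambda69 := by
  intro r
  have hε := eps69_mem_lattice69
  have hε' := eps69_inv_mem_lattice69
  refine ⟨mem_lattice69.1 ?_, mem_lattice69.1 ?_⟩
  · convert lattice69.pow_sub_one_mul_mem hε' eps69_inv_sub_one_mul_theta69_mem r using 1
    ext <;> simp only [P69, theta69, Prod.pow_mk, zpow_neg, zpow_natCast, inv_pow,
      Prod.fst_sub, Prod.snd_sub, Prod.fst_mul, Prod.snd_mul, Prod.fst_one, Prod.snd_one] <;> ring
  · convert lattice69.add_mem (lattice69.pow_mem hε r)
      (lattice69.pow_sub_one_mul_mem hε eps69_sub_one_mul_theta69_mem r) using 1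
    ext <;> simp only [P69', theta69, Prod.pow_mk, zpow_neg, zpow_natCast, inv_pow,
      Prod.fst_sub, Prod.snd_sub, Prod.fst_mul, Prod.snd_mul, Prod.fst_one, Prod.snd_one,
      Prod.fst_add, Prod.snd_add, Prod.fst_neg, Prod.snd_neg] <;> ring

end
end

section
/- Let m > 1 be a squarefree integer, K = ℚ(√m) (regarded as a subfield of ℝ with √m > 0), ε > 1 a unit of the ring of integers O_K, ξ ∈ K, and k > 0 a real number. If there exists α ∈ O_K with |N_{K/ℚ}(ξ − α)| < k, then there exist η = r + s√m ∈ K (with r, s ∈ ℚ) and j ∈ ℤ such that: (i) η − ξε^j ∈ O_K; (ii) |N_{K/ℚ}(η)| < k; (iii) |r| < μ and |s| < μ/√m, where μ = (√k/2)(√ε + 1/√ε). -/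
/-!
Let `β = ξ - α ≠ 0` (for `β = 0` take `η = 0`) and `η = β ε^j`. Then `η - ξ ε^j = -α ε^j ∈ 𝓞 K`
and `|N η| = |N β| < k`. Multiplying by `ε > 1` scales the real image by `ε`, so a suitable `j`
puts `|η|` in `(√k / √ε, √k · √ε]`. With `η'` the conjugate, `|η η'| = |N η| < k`, and as
`x ↦ x + k / x` is at most `√k / √ε + √k · √ε` on that interval, `|η| + |η'| < 2μ`.
Finally `r = (η + η') / 2` and `s √m = (η - η') / 2`.
-/

open NumberField

section QuadraticExtension

variable {F K : Type*} [Field F] [Field K] [Algebra F K]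

theorem exists_basis_one_of_notMem_range (hdeg : Module.finrank F K = 2) {δ : K}
    (hδ : δ ∉ Set.range (algebraMap F K)) :
    ∃ B : Module.Basis (Fin 2) F K, B 0 = 1 ∧ B 1 = δ := by
  have hind : LinearIndependent F ![1, δ] :=
    (LinearIndependent.pair_iff' one_ne_zero).mpr fun a ha =>
      hδ ⟨a, by rw [Algebra.algebraMap_eq_smul_one, ha]⟩
  exact ⟨basisOfLinearIndependentOfCardEqFinrank hind (by simp [hdeg]), by simp, by simp⟩

theorem Module.Basis.eq_algebraMap_add_algebraMap_mul (B : Module.Basis (Fin 2) F K)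
    (hB0 : B 0 = 1) (x : K) :
    x = algebraMap F K (B.repr x 0) + algebraMap F K (B.repr x 1) * B 1 := by
  conv_lhs => rw [← B.sum_repr x]
  simp [Fin.sum_univ_two, hB0, Algebra.smul_def]

theorem Module.Basis.norm_algebraMap_add_algebraMap_mul (B : Module.Basis (Fin 2) F K)
    (hB0 : B 0 = 1) {d : F} (hd : B 1 ^ 2 = algebraMap F K d) (r s : F) :
    Algebra.norm F (algebraMap F K r + algebraMap F K s * B 1) = r ^ 2 - d * s ^ 2 := by
  have h0 : (algebraMap F K r + algebraMap F K s * B 1) * B 0 = r • B 0 + s • B 1 := by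
    simp [hB0, Algebra.smul_def]
  have h1 : (algebraMap F K r + algebraMap F K s * B 1) * B 1 = (d * s) • B 0 + r • B 1 := by
    simp only [hB0, Algebra.smul_def, map_mul, mul_one]
    linear_combination (algebraMap F K s) * hd
  rw [Algebra.norm_eq_matrix_det B, Matrix.det_fin_two]
  simp only [Algebra.leftMulMatrix_eq_repr_mul, h0, h1, map_add, map_smul,
    Module.Basis.repr_self, Finsupp.add_apply, Finsupp.smul_apply, Finsupp.single_eq_same,
    Finsupp.single_eq_of_ne zero_ne_one, Finsupp.single_eq_of_ne one_ne_zero, smul_eq_mul]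
  ring

end QuadraticExtension

theorem exists_rat_eq_add_mul_and_norm_eq {K : Type*} [Field K] [CharZero K]
    (hdeg : Module.finrank ℚ K = 2) {d : ℚ} {δ : K} (hδd : δ ^ 2 = d)
    (hδ : δ ∉ Set.range (algebraMap ℚ K)) (x : K) :
    ∃ r s : ℚ, x = r + s * δ ∧ Algebra.norm ℚ x = r ^ 2 - d * s ^ 2 := by
  obtain ⟨B, hB0, hB1⟩ := exists_basis_one_of_notMem_range hdeg hδ
  refine ⟨B.repr x 0, B.repr x 1, by simpa [hB1] using B.eq_algebraMap_add_algebraMap_mul hB0 x,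
    ?_⟩
  conv_lhs => rw [B.eq_algebraMap_add_algebraMap_mul hB0 x]
  exact B.norm_algebraMap_add_algebraMap_mul hB0 (by simp [hB1, hδd]) _ _

theorem irrational_sqrt_natCast_of_squarefree {m : ℕ} (hm : Squarefree m) (h1 : 1 < m) :
    Irrational √m := by
  refine irrational_sqrt_natCast_iff.mpr ?_
  rintro ⟨d, rfl⟩
  simp [Nat.isUnit_iff.mp (hm d dvd_rfl)] at h1

section LinearOrderedField

variable {R : Type*} [Field R] [LinearOrder R] [IsStrictOrderedRing R]

theorem exists_mul_zpow_mem_Ioc [Archimedean R] {a c t : R} (ha : 0 < a) (hc : 0 < c)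
    (ht : 1 < t) : ∃ j : ℤ, c * t ^ j ∈ Set.Ioc a (a * t) := by
  obtain ⟨n, hn_le, hn_lt⟩ := exists_mem_Ico_zpow (div_pos ha hc) ht
  refine ⟨n + 1, (div_lt_iff₀' hc).mp hn_lt, ?_⟩
  rw [zpow_add_one₀ (by positivity), ← mul_assoc]
  exact mul_le_mul_of_nonneg_right ((le_div_iff₀' hc).mp hn_le) (by positivity)

/-- `x ↦ x + ab/x` is at most `a + b` on `[a, b]`. -/
theorem abs_add_abs_lt_of_abs_mul_lt {a b x y : R} (ha : 0 < a) (hx : |x| ∈ Set.Ioc a b)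
    (hxy : |x * y| < a * b) : |x| + |y| < a + b := by
  obtain ⟨hax, hxb⟩ := hx
  rw [abs_mul] at hxy
  nlinarith [abs_nonneg y, mul_nonneg (sub_pos.2 hax).le (sub_nonneg.2 hxb)]

theorem abs_lt_and_abs_lt_of_abs_add_add_abs_sub_lt {x y c : R}
    (h : |x + y| + |x - y| < 2 * c) : |x| < c ∧ |y| < c := by
  have hx : |2 * x| ≤ |x + y| + |x - y| := by
    simpa only [← two_mul, add_add_sub_cancel] using abs_add_le (x + y) (x - y)
  have hy : |2 * y| ≤ |x + y| + |x - y| := by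
    simpa only [add_sub_sub_cancel, ← two_mul] using abs_sub (x + y) (x - y)
  rw [abs_mul, abs_two] at hx hy
  constructor <;> linarith

end LinearOrderedField

theorem abs_lt_and_abs_lt_of_abs_add_mem_Ioc {k t x y : ℝ} (hk : 0 < k) (ht : 0 < t)
    (hxy : |x + y| ∈ Set.Ioc (√k / √t) (√k / √t * t)) (hprod_lt : |(x + y) * (x - y)| < k) :
    |x| < √k / 2 * (√t + 1 / √t) ∧ |y| < √k / 2 * (√t + 1 / √t) := by
  have hprod : √k / √t * (√k / √t * t) = k := by
    field_simp
    rw [Real.sq_sqrt hk.le, Real.sq_sqrt ht.le, mul_comm]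
  have hsum : √k / √t + √k / √t * t = 2 * (√k / 2 * (√t + 1 / √t)) := by
    field_simp
    rw [Real.sq_sqrt ht.le]
    ring
  refine abs_lt_and_abs_lt_of_abs_add_add_abs_sub_lt ?_
  rw [← hsum]
  exact abs_add_abs_lt_of_abs_mul_lt (by positivity) hxy (by rwa [hprod])

theorem exists_abs_apply_mul_zpow_mem_Ioc {K : Type*} [DivisionRing K] (φ : K →+* ℝ)
    {ε β : K} (hε : 1 < φ ε) (hβ : β ≠ 0) {a : ℝ} (ha : 0 < a) :
    ∃ j : ℤ, |φ (β * ε ^ j)| ∈ Set.Ioc a (a * φ ε) := by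
  obtain ⟨j, hj⟩ := exists_mul_zpow_mem_Ioc ha (abs_pos.2 ((map_ne_zero φ).2 hβ)) hε
  refine ⟨j, ?_⟩
  rwa [map_mul, map_zpow₀, abs_mul, abs_of_pos (zpow_pos (zero_lt_one.trans hε) j)]

theorem exists_small_representative_quadratic_general {K : Type*} [Field K] [NumberField K]
    (m : ℕ) (hm : Squarefree m) (h1 : 1 < m)
    (sqrtm : K) (hs : sqrtm ^ 2 = m) (hdeg : Module.finrank ℚ K = 2)
    (φ : K →+* ℝ) (hφ : φ sqrtm = Real.sqrt m)
    (u : (𝓞 K)ˣ) (hu : 1 < φ ((u : 𝓞 K) : K))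
    (ξ : K) (k : ℝ)
    (h : ∃ α : 𝓞 K, ((|Algebra.norm ℚ (ξ - (α : K))| : ℚ) : ℝ) < k) :
    ∃ r s : ℚ, ∃ j : ℤ,
      (∃ w : 𝓞 K, (r : K) + (s : K) * sqrtm - ξ * ((u : 𝓞 K) : K) ^ j = w) ∧
      ((|Algebra.norm ℚ ((r : K) + (s : K) * sqrtm)| : ℚ) : ℝ) < k ∧
      (|r| : ℝ) < Real.sqrt k / 2 *
          (Real.sqrt (φ ((u : 𝓞 K) : K)) + 1 / Real.sqrt (φ ((u : 𝓞 K) : K))) ∧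
      (|s| : ℝ) < Real.sqrt k / 2 *
          (Real.sqrt (φ ((u : 𝓞 K) : K)) + 1 / Real.sqrt (φ ((u : 𝓞 K) : K))) /
            Real.sqrt m := by
  obtain ⟨α, hα⟩ := h
  have hk : 0 < k := lt_of_le_of_lt (by positivity) hα
  have ht : 0 < φ ((u : 𝓞 K) : K) := zero_lt_one.trans hu
  have hm0 : 0 < √(m : ℝ) := by positivity
  by_cases hξ : ξ = α
  · refine ⟨0, 0, 0, ⟨-α, by simp [hξ]⟩, by simpa using hk, ?_, ?_⟩
    · simp only [Rat.cast_zero, abs_zero]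
      positivity
    · simpa using div_pos (by positivity) hm0
  obtain ⟨j, hj⟩ := exists_abs_apply_mul_zpow_mem_Ioc φ hu (sub_ne_zero.2 hξ)
    (a := √k / √(φ ((u : 𝓞 K) : K))) (by positivity)
  have hN : |Algebra.norm ℚ ((ξ - α) * ((u : 𝓞 K) : K) ^ j)| = |Algebra.norm ℚ (ξ - α)| := by
    rw [← Units.coe_zpow, map_mul, abs_mul, Units.norm, mul_one]
  have hint : ∃ w : 𝓞 K, (ξ - α) * ((u : 𝓞 K) : K) ^ j - ξ * ((u : 𝓞 K) : K) ^ j = w :=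
    ⟨-(α * ↑(u ^ j)), by simp only [map_neg, map_mul, Units.coe_zpow]; ring⟩
  have hδ : sqrtm ∉ Set.range (algebraMap ℚ K) := fun ⟨q, hq⟩ =>
    irrational_sqrt_natCast_of_squarefree hm h1 ⟨q, by simp [← hφ, ← hq]⟩
  obtain ⟨r, s, hη, hNrs⟩ :=
    exists_rat_eq_add_mul_and_norm_eq hdeg (d := m) (by simpa using hs) hδ ((ξ - α) * _ ^ j)
  rw [hη] at hj hN hint hNrs
  have hφη : φ (r + s * sqrtm) = r + s * √m := by simp [hφ]
  have hconj : ((r ^ 2 - m * s ^ 2 : ℚ) : ℝ) = (r + s * √m) * (r - s * √m) := by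
    push_cast
    linear_combination (s : ℝ) ^ 2 * Real.sq_sqrt (Nat.cast_nonneg (α := ℝ) m)
  obtain ⟨hr_lt, hs_lt⟩ := abs_lt_and_abs_lt_of_abs_add_mem_Ioc hk ht (hφη ▸ hj)
    (by rw [← hconj, ← hNrs]; exact_mod_cast hN ▸ hα)
  refine ⟨r, s, j, hint, hN ▸ hα, hr_lt, ?_⟩
  rwa [lt_div_iff₀ hm0, ← abs_of_pos hm0, ← abs_mul]

/-- Let `K = ℚ(√m)` (`m > 1` squarefree) be embedded in `ℝ` with `√m > 0`, let `ε > 1`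
be a unit of `𝓞 K`, `ξ ∈ K` and `k > 0`.  If `|N(ξ − α)| < k` for some `α ∈ 𝓞 K`, then
there are `η = r + s√m ∈ K` and `j ∈ ℤ` with `η − ξε^j ∈ 𝓞 K`, `|N(η)| < k`, `|r| < μ`
and `|s| < μ/√m`, where `μ = (√k/2)(√ε + 1/√ε)`. -/
theorem exists_small_representative_quadratic {K : Type*} [Field K] [NumberField K]
    (m : ℕ) (hm : Squarefree m) (h1 : 1 < m)
    (sqrtm : K) (hs : sqrtm ^ 2 = m) (hdeg : Module.finrank ℚ K = 2)
    (φ : K →+* ℝ) (hφ : φ sqrtm = Real.sqrt m)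
    (u : (𝓞 K)ˣ) (hu : 1 < φ ((u : 𝓞 K) : K))
    (ξ : K) (k : ℝ) (hk : 0 < k)
    (h : ∃ α : 𝓞 K, ((|Algebra.norm ℚ (ξ - (α : K))| : ℚ) : ℝ) < k) :
    ∃ r s : ℚ, ∃ j : ℤ,
      (∃ w : 𝓞 K, (r : K) + (s : K) * sqrtm - ξ * ((u : 𝓞 K) : K) ^ j = w) ∧
      ((|Algebra.norm ℚ ((r : K) + (s : K) * sqrtm)| : ℚ) : ℝ) < k ∧
      (|r| : ℝ) < Real.sqrt k / 2 *
          (Real.sqrt (φ ((u : 𝓞 K) : K)) + 1 / Real.sqrt (φ ((u : 𝓞 K) : K))) ∧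
      (|s| : ℝ) < Real.sqrt k / 2 *
          (Real.sqrt (φ ((u : 𝓞 K) : K)) + 1 / Real.sqrt (φ ((u : 𝓞 K) : K))) /
            Real.sqrt m :=
  exists_small_representative_quadratic_general m hm h1 sqrtm hs hdeg φ hφ u hu ξ k h
end

section
/- Let P₀ ∈ ℝ² be the point with pair (1 + (4/23)√69, −(4/23)√69). Then the inhomogeneous minimum of P₀ with respect to the norm form of ℚ(√69) equals (165 − 15√69)/46; that is, inf over α ∈ O_K of |1 + (4/23)√69 − α| · |−(4/23)√69 − α'| = (165 − 15√69)/46, where α' denotes the conjugate of α, and the infimum is attained at α = (5 + √69)/2. -/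
/-!
Write `α = a + b(1+√69)/2` and put `k = 8 - 23b`, `j = 2a + b - 1`. Then
`276 (ξ₀ - α)(ξ₀' - α') = 69j² - (3k + √69)²`, so the claim is `|X| ≥ 990 - 90√69` for
`X = (3k + √69)² - 69j²`, with equality at `(k, j) = (-15, 4)`, i.e. `α = (5 + √69)/2`.

The product of `X` with its conjugate `X - 12k√69` is `9u₋u₊`, where `u± = 3k² - 23(j ± 1)²`
are integers `≡ 8 mod 23` and `≡ 0 mod 4`; congruences mod 3 and mod 7 exclude `8` and `-84`,
so `|u±| ≥ 100`. As `u₋ - u₊ = 92j`, this gives `|X| (|X| + 12|k|√69) ≥ 9 (9200|j| - 10000)`.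
If `|X|` were small, `|j|` would be close to `3|k|/√69`, which contradicts this bound once
`|k| ≥ 53`; the four remaining values `k ∈ {-38, -15, 8, 31}` are settled by locating
`(3k + √69)²/69` between two consecutive squares `j²` of the admissible parity.
-/

noncomputable section

lemma s69_sq : s69 ^ 2 = 69 := Real.sq_sqrt (by norm_num)

lemma s69_pos : 0 < s69 := Real.sqrt_pos.mpr (by norm_num)

lemma lt_s69 : 8.3066 < s69 := by nlinarith [s69_sq, s69_pos]

lemma s69_lt : s69 < 8.3067 := by nlinarith [s69_sq, s69_pos]

namespace Sqrt69

/-- `3 * Q k m` is the norm of `3k + m√69`. -/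
def Q (k m : ℤ) : ℤ := 3 * k ^ 2 - 23 * m ^ 2

lemma Q_ne_eight (k m : ℤ) : Q k m ≠ 8 := by
  intro h
  have h3 := congrArg (fun v : ℤ => (v : ZMod 3)) h
  push_cast [Q] at h3
  have hKM : ∀ K M : ZMod 3, 3 * K ^ 2 - 23 * M ^ 2 ≠ 8 := by decide
  exact hKM _ _ h3

lemma sq_sub_69_mul_sq_ne_neg_28 (k n : ℤ) : k ^ 2 - 69 * n ^ 2 ≠ -28 := by
  intro h
  have h7 := congrArg (fun v : ℤ => (v : ZMod 7)) h
  push_cast at h7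
  have hkn : ∀ K N : ZMod 7, K ^ 2 - 69 * N ^ 2 = -28 → K = 0 ∧ N = 0 := by decide
  obtain ⟨hk, hn⟩ := hkn _ _ h7
  obtain ⟨k', rfl⟩ := (ZMod.intCast_zmod_eq_zero_iff_dvd k 7).mp hk
  obtain ⟨n', rfl⟩ := (ZMod.intCast_zmod_eq_zero_iff_dvd n 7).mp hn
  have h49 : 49 * (k' ^ 2 - 69 * n' ^ 2) = -28 := by push_cast at h; linear_combination h
  omega

lemma Q_ne_neg_84 (k m : ℤ) : Q k m ≠ -84 := by
  intro h
  have h3 := congrArg (fun v : ℤ => (v : ZMod 3)) h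
  push_cast [Q] at h3
  have hm : ∀ K M : ZMod 3, 3 * K ^ 2 - 23 * M ^ 2 = -84 → M = 0 := by decide
  obtain ⟨n, rfl⟩ : (3 : ℤ) ∣ m := (ZMod.intCast_zmod_eq_zero_iff_dvd m 3).mp (hm _ _ h3)
  exact sq_sub_69_mul_sq_ne_neg_28 k n (by unfold Q at h; linarith)

lemma hundred_le_abs_Q {k m : ℤ} (hk : k ≡ 8 [ZMOD 23]) (hkm : k ≡ m [ZMOD 2]) :
    100 ≤ |Q k m| := by
  obtain ⟨b, hb⟩ := hk.symm.dvd
  obtain ⟨c, hc⟩ := hkm.dvd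
  have h23 : Q k m = 8 + 23 * (8 + 48 * b + 69 * b ^ 2 - m ^ 2) := by
    rw [Q, show k = 8 + 23 * b by linarith]; ring
  have h4 : Q k m = 4 * (-5 * k ^ 2 - 23 * k * c - 23 * c ^ 2) := by
    rw [Q, show m = k + 2 * c by linarith]; ring
  have h8 := Q_ne_eight k m
  have h84 := Q_ne_neg_84 k m
  rw [le_abs]
  omega

lemma mul_abs_sub_sub_sq_le_abs_mul {α : Type*} [CommRing α] [LinearOrder α]
    [IsStrictOrderedRing α] {c u v : α} (hu : c ≤ |u|) (hv : c ≤ |v|) :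
    c * |u - v| - c ^ 2 ≤ |u * v| := by
  rw [abs_mul]
  rcases le_total 0 c with hc | hc
  · nlinarith [abs_sub u v, mul_nonneg (sub_nonneg.2 hu) (sub_nonneg.2 hv)]
  · nlinarith [abs_nonneg (u - v), abs_nonneg u, abs_nonneg v]

lemma le_abs_Q_mul_Q {k j : ℤ} (hk : k ≡ 8 [ZMOD 23]) (hjk : j + k ≡ 1 [ZMOD 2]) :
    9200 * |j| - 10000 ≤ |Q k (j - 1) * Q k (j + 1)| := by
  have hpar := hjk.dvd
  have hm := hundred_le_abs_Q (m := j - 1) hk (Int.modEq_of_dvd (by omega))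
  have hp := hundred_le_abs_Q (m := j + 1) hk (Int.modEq_of_dvd (by omega))
  have hdiff : Q k (j - 1) - Q k (j + 1) = 92 * j := by unfold Q; ring
  have := mul_abs_sub_sub_sq_le_abs_mul hm hp
  rw [hdiff, abs_mul 92 j, abs_of_pos (by norm_num : (0 : ℤ) < 92)] at this
  linarith

def X (k j : ℤ) : ℝ := (3 * k + s69) ^ 2 - 69 * j ^ 2

lemma X_mul_conj (k j : ℤ) :
    X k j * (X k j - 12 * k * s69) = 9 * (Q k (j - 1) * Q k (j + 1) : ℤ) := by
  unfold X Q
  push_cast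
  linear_combination (s69 ^ 2 + 69 - 18 * (k : ℝ) ^ 2 - 138 * (j : ℝ) ^ 2) * s69_sq

lemma le_abs_X_of_53_le_abs {k j : ℤ} (hk : k ≡ 8 [ZMOD 23]) (hjk : j + k ≡ 1 [ZMOD 2])
    (hK : 53 ≤ |k|) : 990 - 90 * s69 ≤ |X k j| := by
  by_contra! hX
  set K : ℝ := |(k : ℝ)|
  set J : ℝ := |(j : ℝ)|
  have hK53 : 53 ≤ K := by simpa [K, ← Int.cast_abs] using (Int.cast_le (R := ℝ)).2 hK
  have hQ : 9 * (9200 * J - 10000) ≤ |X k j| * |X k j - 12 * k * s69| := by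
    have := (Int.cast_le (R := ℝ)).2 (le_abs_Q_mul_Q hk hjk)
    push_cast at this
    rw [← abs_mul, X_mul_conj, abs_mul, abs_of_pos (by norm_num : (0 : ℝ) < 9)]
    push_cast
    linarith
  have hconj : |X k j - 12 * k * s69| ≤ |X k j| + 12 * K * s69 := by
    have : |12 * (k : ℝ) * s69| = 12 * K * s69 := by
      rw [abs_mul, abs_mul, abs_of_pos s69_pos, abs_of_pos (by norm_num : (0 : ℝ) < 12)]
    linarith [abs_sub (X k j) (12 * k * s69)]
  have hJ_upper : 82800 * J ≤ 148764 + 24164 * K := by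
    have hprod := mul_le_mul hX.le (hconj.trans (add_le_add_left hX.le _)) (abs_nonneg _)
      (by linarith [s69_lt] : 0 ≤ 990 - 90 * s69)
    -- `(990 - 90√69)² < 58764` and `12 (990 - 90√69) √69 < 24164`
    nlinarith [s69_sq, lt_s69, s69_lt,
      mul_le_mul_of_nonneg_left s69_lt.le (by positivity : 0 ≤ K)]
  have hJ_lower : 9 * K ^ 2 - 50 * K - 174 < 69 * J ^ 2 := by
    have hks : -(K * s69) ≤ k * s69 := by
      have : |(k : ℝ) * s69| = K * s69 := by rw [abs_mul, abs_of_pos s69_pos]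
      linarith [neg_abs_le ((k : ℝ) * s69)]
    have hXlt := (abs_lt.1 hX).2
    unfold X at hXlt
    have hk2 : (k : ℝ) ^ 2 = K ^ 2 := (sq_abs _).symm
    have hj2 : (j : ℝ) ^ 2 = J ^ 2 := (sq_abs _).symm
    nlinarith [s69_sq, lt_s69, s69_lt,
      mul_le_mul_of_nonneg_left s69_lt.le (by positivity : 0 ≤ K)]
  nlinarith [abs_nonneg (j : ℝ)]

lemma le_abs_sub_mul_sq_of_modEq {t c d : ℝ} {m j : ℤ} (hd : 0 ≤ d) (hm : 0 ≤ m)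
    (hjm : j ≡ m [ZMOD 2]) (hlo : c ≤ t - d * m ^ 2) (hhi : c ≤ d * (m + 2) ^ 2 - t) :
    c ≤ |t - d * j ^ 2| := by
  have hj : j ^ 2 ≤ m ^ 2 ∨ (m + 2) ^ 2 ≤ j ^ 2 := by
    have := hjm.dvd
    rcases (by omega : (-m ≤ j ∧ j ≤ m) ∨ m + 2 ≤ j ∨ j ≤ -(m + 2)) with h | h | h
    · left; nlinarith
    · right; nlinarith
    · right; nlinarith
  rcases hj with hj | hj
  · have hj' : (j : ℝ) ^ 2 ≤ (m : ℝ) ^ 2 := by exact_mod_cast hj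
    exact le_abs.2 (Or.inl (by nlinarith [mul_le_mul_of_nonneg_left hj' hd]))
  · have hj' : ((m : ℝ) + 2) ^ 2 ≤ (j : ℝ) ^ 2 := by exact_mod_cast hj
    exact le_abs.2 (Or.inr (by nlinarith [mul_le_mul_of_nonneg_left hj' hd]))

lemma le_abs_X {k j : ℤ} (hk : k ≡ 8 [ZMOD 23]) (hjk : j + k ≡ 1 [ZMOD 2]) :
    990 - 90 * s69 ≤ |X k j| := by
  rcases le_or_gt 53 |k| with hK | hK
  · exact le_abs_X_of_53_le_abs hk hjk hK
  have hk23 := hk.symm.dvd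
  have hjk2 := hjk.dvd
  rw [abs_lt] at hK
  obtain rfl | rfl | rfl | rfl : k = -38 ∨ k = -15 ∨ k = 8 ∨ k = 31 := by omega
  · refine le_abs_sub_mul_sq_of_modEq (m := 11) (by norm_num) (by norm_num)
      (Int.modEq_of_dvd (by omega)) ?_ ?_ <;> push_cast <;> nlinarith [s69_sq, lt_s69, s69_lt]
  · refine le_abs_sub_mul_sq_of_modEq (m := 4) (by norm_num) (by norm_num)
      (Int.modEq_of_dvd (by omega)) ?_ ?_ <;> push_cast <;> nlinarith [s69_sq, lt_s69, s69_lt]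
  · refine le_abs_sub_mul_sq_of_modEq (m := 3) (by norm_num) (by norm_num)
      (Int.modEq_of_dvd (by omega)) ?_ ?_ <;> push_cast <;> nlinarith [s69_sq, lt_s69, s69_lt]
  · refine le_abs_sub_mul_sq_of_modEq (m := 12) (by norm_num) (by norm_num)
      (Int.modEq_of_dvd (by omega)) ?_ ?_ <;> push_cast <;> nlinarith [s69_sq, lt_s69, s69_lt]

lemma mul_conj_eq_neg_X (a b : ℤ) :
    276 * (((1 + (4 / 23) * s69) - ((a : ℝ) + (b : ℝ) * ((1 + s69) / 2))) *
      ((-(4 / 23) * s69) - ((a : ℝ) + (b : ℝ) * ((1 - s69) / 2)))) =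
      -X (8 - 23 * b) (2 * a + b - 1) := by
  unfold X
  push_cast
  linear_combination (1 - 3 * (8 - 23 * (b : ℝ)) ^ 2 / 23) * s69_sq

lemma le_abs_mul_abs (a b : ℤ) :
    (165 - 15 * s69) / 46 ≤
      |(1 + (4 / 23) * s69) - ((a : ℝ) + (b : ℝ) * ((1 + s69) / 2))| *
      |(-(4 / 23) * s69) - ((a : ℝ) + (b : ℝ) * ((1 - s69) / 2))| := by
  have hX := le_abs_X (k := 8 - 23 * b) (j := 2 * a + b - 1)
    (Int.modEq_of_dvd ⟨b, by ring⟩) (Int.modEq_of_dvd ⟨11 * b - a - 3, by ring⟩)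
  have h276 := congrArg abs (mul_conj_eq_neg_X a b)
  rw [abs_neg, abs_mul, abs_of_pos (by norm_num : (0 : ℝ) < 276), abs_mul] at h276
  linarith

lemma abs_mul_abs_at_witness :
    |(1 + (4 / 23) * s69) - (5 + s69) / 2| * |(-(4 / 23) * s69) - (5 - s69) / 2| =
      (165 - 15 * s69) / 46 := by
  rw [abs_of_neg (by nlinarith [s69_pos]), abs_of_pos (by nlinarith [lt_s69])]
  linear_combination (225 / 2116) * s69_sq

end Sqrt69

/-- The inhomogeneous minimum of the point `P₀` with pair
`(ξ₀, ξ₀') = (1 + (4/23)√69, −(4/23)√69)` with respect to the norm form of `ℚ(√69)`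
equals `(165 − 15√69)/46`:  here the infimum runs over `α = a + b(1+√69)/2 ∈ 𝓞 K`
(`a, b ∈ ℤ`), with conjugate `α' = a + b(1−√69)/2`, and it is attained at
`α = (5 + √69)/2` (i.e. `a = 2`, `b = 1`). -/
theorem inhomogeneous_minimum_P0_sqrt69 :
    (⨅ p : ℤ × ℤ,
        |(1 + (4 / 23) * s69) - ((p.1 : ℝ) + (p.2 : ℝ) * ((1 + s69) / 2))| *
        |(-(4 / 23) * s69) - ((p.1 : ℝ) + (p.2 : ℝ) * ((1 - s69) / 2))|) =
      (165 - 15 * s69) / 46 ∧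
    |(1 + (4 / 23) * s69) - (5 + s69) / 2| * |(-(4 / 23) * s69) - (5 - s69) / 2| =
      (165 - 15 * s69) / 46 := by
  refine ⟨IsGLB.ciInf_eq (IsLeast.isGLB ⟨⟨(2, 1), ?_⟩, ?_⟩), Sqrt69.abs_mul_abs_at_witness⟩
  · rw [← Sqrt69.abs_mul_abs_at_witness]
    push_cast
    ring_nf
  · rintro _ ⟨p, rfl⟩
    exact Sqrt69.le_abs_mul_abs p.1 p.2

end
end
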